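/- arXiv:2403.16088 — 5 statements merged into one kernel-verified Lean document; each statement's English description precedes it below -/
import Mathlib

section
/- For every positive integer k there exists a geometric graph G with exactly k pairs of crossing edges and geochromatic number X(G) = 4. Concretely, for k ≥ 2, the geometric graph consisting of a star K_{1,k} with center 0 and leaves 1,…,k, together with one additional edge {k+1, k+2} that crosses all k star edges (and no other crossings), has geochromatic number 4. -/
/-- An abstract geometric graph: a simple graph together with a symmetric
crossing relation on (unordered) edges such that crossing edges share no endpoint. -/
structure GeomGraph (V : Type*) where
  G : SimpleGraph V
  cross : Sym2 V → Sym2 V → Prop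
  cross_symm : ∀ e₁ e₂, cross e₁ e₂ → cross e₂ e₁
  cross_mem : ∀ e₁ e₂, cross e₁ e₂ → e₁ ∈ G.edgeSet ∧ e₂ ∈ G.edgeSet
  cross_disjoint : ∀ e₁ e₂, cross e₁ e₂ → ∀ v, v ∈ e₁ → v ∉ e₂

/-- A geometric homomorphism: preserves adjacency and crossings. -/
def IsGeomHom {V W : Type*} (A : GeomGraph V) (B : GeomGraph W) (f : V → W) : Prop :=
  (∀ u v, A.G.Adj u v → B.G.Adj (f u) (f v)) ∧
  ∀ e₁ e₂, A.cross e₁ e₂ → B.cross (Sym2.map f e₁) (Sym2.map f e₂)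

/-- A geometric realization of the complete graph `K_n`: the complete graph on `Fin n`
together with the crossing relation induced by a straight-line drawing on `n` points
in general position in the plane. -/
def IsRealizationOfK (n : ℕ) (K : GeomGraph (Fin n)) : Prop :=
  K.G = ⊤ ∧ ∃ p : Fin n → ℝ × ℝ,
    Function.Injective p ∧
    (∀ i j k : Fin n, i ≠ j → j ≠ k → i ≠ k →
      ¬ Collinear ℝ ({p i, p j, p k} : Set (ℝ × ℝ))) ∧
    ∀ a b c d : Fin n, a ≠ b → c ≠ d →
      (K.cross s(a, b) s(c, d) ↔
        a ≠ c ∧ a ≠ d ∧ b ≠ c ∧ b ≠ d ∧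
          (openSegment ℝ (p a) (p b) ∩ openSegment ℝ (p c) (p d)).Nonempty)

/-- The set of `n` such that there is a geometric homomorphism from `A` to some
geometric realization of `K_n`. -/
def geoSet {V : Type*} (A : GeomGraph V) : Set ℕ :=
  {n | ∃ K : GeomGraph (Fin n), IsRealizationOfK n K ∧ ∃ f : V → Fin n, IsGeomHom A K f}

/-- The geochromatic number `X(A)`. -/
noncomputable def geoChrom {V : Type*} (A : GeomGraph V) : ℕ := sInf (geoSet A)

/-- The set of `n` admitting a pseudo-geochromatic `n`-coloring. -/
def pseudoSet {V : Type*} (A : GeomGraph V) : Set ℕ :=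
  {n | ∃ c : V → Fin n,
    (∀ u v, A.G.Adj u v → c u ≠ c v) ∧
    ∀ a b x y : V, A.cross s(a, b) s(x, y) →
      c a ≠ c b ∧ c a ≠ c x ∧ c a ≠ c y ∧ c b ≠ c x ∧ c b ≠ c y ∧ c x ≠ c y}

/-- The pseudo-geochromatic number `X'(A)`. -/
noncomputable def pseudoChrom {V : Type*} (A : GeomGraph V) : ℕ := sInf (pseudoSet A)

/-- All distinct crossings of `A` are vertex-disjoint (independent crossings). -/
def IndepCrossings {V : Type*} (A : GeomGraph V) : Prop :=
  ∀ e₁ e₂ f₁ f₂, A.cross e₁ e₂ → A.cross f₁ f₂ →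
    ¬ ((e₁ = f₁ ∧ e₂ = f₂) ∨ (e₁ = f₂ ∧ e₂ = f₁)) →
    ∀ u, (u ∈ e₁ ∨ u ∈ e₂) → ¬ (u ∈ f₁ ∨ u ∈ f₂)



namespace GeoAux

lemma not_collinear_of_det {a b c : ℝ × ℝ}
    (h : (b.1 - a.1) * (c.2 - a.2) - (b.2 - a.2) * (c.1 - a.1) ≠ 0) :
    ¬ Collinear ℝ ({a, b, c} : Set (ℝ × ℝ)) := by
  intro hc
  rw [collinear_iff_of_mem (Set.mem_insert a _)] at hc
  obtain ⟨v, hv⟩ := hc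
  obtain ⟨r, hr⟩ := hv b (by simp)
  obtain ⟨s, hs⟩ := hv c (by simp)
  apply h
  have hb1 : b.1 = r * v.1 + a.1 := by rw [hr]; rfl
  have hb2 : b.2 = r * v.2 + a.2 := by rw [hr]; rfl
  have hc1 : c.1 = s * v.1 + a.1 := by rw [hs]; rfl
  have hc2 : c.2 = s * v.2 + a.2 := by rw [hs]; rfl
  rw [hb1, hb2, hc1, hc2]; ring

lemma seg_snd {u v x : ℝ × ℝ} (h : x ∈ openSegment ℝ u v) (hc : u.2 = v.2) : x.2 = u.2 := by
  obtain ⟨a, b, ha, hb, hab, hx⟩ := h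
  have : x.2 = a * u.2 + b * v.2 := by rw [← hx]; rfl
  rw [this, ← hc]; linear_combination u.2 * hab

lemma seg_fst {u v x : ℝ × ℝ} (h : x ∈ openSegment ℝ u v) (hc : u.1 = v.1) : x.1 = u.1 := by
  obtain ⟨a, b, ha, hb, hab, hx⟩ := h
  have : x.1 = a * u.1 + b * v.1 := by rw [← hx]; rfl
  rw [this, ← hc]; linear_combination u.1 * hab

lemma mem_diag1 : (((1:ℝ)/2, (1:ℝ)/2)) ∈ openSegment ℝ ((0:ℝ),(0:ℝ)) ((1:ℝ),(1:ℝ)) :=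
  ⟨1/2, 1/2, by norm_num, by norm_num, by norm_num, by norm_num [Prod.ext_iff]⟩

lemma mem_diag2 : (((1:ℝ)/2, (1:ℝ)/2)) ∈ openSegment ℝ ((1:ℝ),(0:ℝ)) ((0:ℝ),(1:ℝ)) :=
  ⟨1/2, 1/2, by norm_num, by norm_num, by norm_num, by norm_num [Prod.ext_iff]⟩



def K4 : GeomGraph (Fin 4) where
  G := ⊤
  cross e₁ e₂ := (e₁ = s(0,2) ∧ e₂ = s(1,3)) ∨ (e₁ = s(1,3) ∧ e₂ = s(0,2))
  cross_symm := by tauto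
  cross_mem := by
    rintro e₁ e₂ (⟨rfl, rfl⟩ | ⟨rfl, rfl⟩) <;>
      simp [SimpleGraph.mem_edgeSet] <;> decide
  cross_disjoint := by
    rintro e₁ e₂ (⟨rfl, rfl⟩ | ⟨rfl, rfl⟩) v <;> revert v <;> decide

noncomputable def sqp : Fin 4 → ℝ × ℝ := ![(0,0), (1,0), (1,1), (0,1)]

lemma sq_inj : Function.Injective sqp := by
  intro i j h
  fin_cases i <;> fin_cases j <;> simp_all [sqp, Prod.ext_iff] <;> norm_num at h

lemma sq_gp : ∀ i j k : Fin 4, i ≠ j → j ≠ k → i ≠ k →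
    ¬ Collinear ℝ ({sqp i, sqp j, sqp k} : Set (ℝ × ℝ)) := by
  intro i j k hij hjk hik
  fin_cases i <;> fin_cases j <;> fin_cases k <;>
    first
    | exact absurd rfl hij
    | exact absurd rfl hjk
    | exact absurd rfl hik
    | (apply not_collinear_of_det; norm_num [sqp])



lemma seg_mem : ∀ (i j : Fin 4),
    (i = 0 ∧ j = 2) ∨ (i = 2 ∧ j = 0) ∨ (i = 1 ∧ j = 3) ∨ (i = 3 ∧ j = 1) →
    (((1:ℝ)/2, (1:ℝ)/2)) ∈ openSegment ℝ (sqp i) (sqp j) := by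
  rintro i j (⟨rfl, rfl⟩ | ⟨rfl, rfl⟩ | ⟨rfl, rfl⟩ | ⟨rfl, rfl⟩) <;>
    simp only [sqp, Matrix.cons_val_zero, Matrix.cons_val_one, Matrix.head_cons,
      Matrix.cons_val_two, Matrix.tail_cons, Matrix.cons_val_three, Matrix.head_fin_const] <;>
    first
      | exact mem_diag1
      | exact mem_diag2
      | (rw [openSegment_symm]; exact mem_diag1)
      | (rw [openSegment_symm]; exact mem_diag2)

lemma K4real : IsRealizationOfK 4 K4 := by
  refine ⟨rfl, sqp, sq_inj, sq_gp, ?_⟩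
  intro a b c d hab hcd
  constructor
  · rintro (⟨h1, h2⟩ | ⟨h1, h2⟩) <;>
      rw [Sym2.eq_iff] at h1 h2 <;>
      obtain (⟨rfl, rfl⟩ | ⟨rfl, rfl⟩) := h1 <;>
      obtain (⟨rfl, rfl⟩ | ⟨rfl, rfl⟩) := h2 <;>
      exact ⟨by decide, by decide, by decide, by decide, ((1:ℝ)/2, (1:ℝ)/2),
        seg_mem _ _ (by decide), seg_mem _ _ (by decide)⟩
  · rintro ⟨h1, h2, h3, h4, x, hx1, hx2⟩
    fin_cases a <;> fin_cases b <;> fin_cases c <;> fin_cases d <;>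
      first
        | exact absurd rfl hab
        | exact absurd rfl hcd
        | exact absurd rfl h1
        | exact absurd rfl h2
        | exact absurd rfl h3
        | exact absurd rfl h4
        | exact Or.inl ⟨by decide, by decide⟩
        | exact Or.inr ⟨by decide, by decide⟩
        | exact absurd ((seg_snd hx1 rfl).symm.trans (seg_snd hx2 rfl)) (by norm_num [sqp])
        | exact absurd ((seg_fst hx1 rfl).symm.trans (seg_fst hx2 rfl)) (by norm_num [sqp])



lemma upper {V : Type*} (A : GeomGraph V) (f : V → Fin 4)
    (hadj : ∀ u v, A.G.Adj u v → f u ≠ f v)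
    (hcross : ∀ e₁ e₂, A.cross e₁ e₂ → K4.cross (Sym2.map f e₁) (Sym2.map f e₂)) :
    4 ∈ geoSet A :=
  ⟨K4, K4real, f, fun u v h => (SimpleGraph.top_adj _ _).2 (hadj u v h), hcross⟩

lemma lower {V : Type*} (A : GeomGraph V) (e₁ e₂ : Sym2 V) (hc : A.cross e₁ e₂)
    {n : ℕ} (hn : n ∈ geoSet A) : 4 ≤ n := by
  obtain ⟨K, hKreal, f, hf1, hf2⟩ := hn
  have hK := hf2 e₁ e₂ hc
  induction e₁ using Sym2.inductionOn with | hf u v =>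
  induction e₂ using Sym2.inductionOn with | hf x y =>
  rw [Sym2.map_pair_eq, Sym2.map_pair_eq] at hK
  have hmem := K.cross_mem _ _ hK
  have huv : f u ≠ f v := ((SimpleGraph.mem_edgeSet _).1 hmem.1).ne
  have hxy : f x ≠ f y := ((SimpleGraph.mem_edgeSet _).1 hmem.2).ne
  have hu := K.cross_disjoint _ _ hK (f u) (Sym2.mem_iff.2 (Or.inl rfl))
  have hv := K.cross_disjoint _ _ hK (f v) (Sym2.mem_iff.2 (Or.inr rfl))
  rw [Sym2.mem_iff] at hu hv
  push_neg at hu hv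
  have hcard : ({f u, f v, f x, f y} : Finset (Fin n)).card = 4 := by
    rw [Finset.card_insert_of_notMem (by simp [huv, hu.1, hu.2]),
      Finset.card_insert_of_notMem (by simp [hv.1, hv.2]),
      Finset.card_insert_of_notMem (by simp [hxy]), Finset.card_singleton]
  calc 4 = ({f u, f v, f x, f y} : Finset (Fin n)).card := hcard.symm
    _ ≤ Fintype.card (Fin n) := Finset.card_le_univ _
    _ = n := Fintype.card_fin n

lemma geoChrom_eq_four {V : Type*} (A : GeomGraph V)
    (h4 : 4 ∈ geoSet A) (e₁ e₂ : Sym2 V) (hc : A.cross e₁ e₂) : geoChrom A = 4 :=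
  le_antisymm (Nat.sInf_le h4) (lower A e₁ e₂ hc (Nat.sInf_mem ⟨4, h4⟩))



lemma part2 (k : ℕ) (hk : 2 ≤ k) (A : GeomGraph (Fin (k + 3)))
    (hAdj : ∀ u v : Fin (k + 3), A.G.Adj u v ↔
      ((∃ i : Fin (k + 3), 1 ≤ (i : ℕ) ∧ (i : ℕ) ≤ k ∧
          s(u, v) = s((⟨0, by omega⟩ : Fin (k + 3)), i)) ∨
        s(u, v) = s((⟨k + 1, by have := hk; omega⟩ : Fin (k + 3)), (⟨k + 2, by have := hk; omega⟩ : Fin (k + 3)))))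
    (hCross : ∀ e₁ e₂ : Sym2 (Fin (k + 3)), A.cross e₁ e₂ ↔
      (∃ i : Fin (k + 3), 1 ≤ (i : ℕ) ∧ (i : ℕ) ≤ k ∧
        ((e₁ = s((⟨0, by omega⟩ : Fin (k + 3)), i) ∧
            e₂ = s((⟨k + 1, by have := hk; omega⟩ : Fin (k + 3)), (⟨k + 2, by have := hk; omega⟩ : Fin (k + 3)))) ∨
          (e₂ = s((⟨0, by omega⟩ : Fin (k + 3)), i) ∧
            e₁ = s((⟨k + 1, by have := hk; omega⟩ : Fin (k + 3)), (⟨k + 2, by have := hk; omega⟩ : Fin (k + 3))))))) :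
    geoChrom A = 4 := by
  set f : Fin (k + 3) → Fin 4 := fun v =>
    if (v : ℕ) = 0 then 0 else if (v : ℕ) ≤ k then 2 else if (v : ℕ) = k + 1 then 1 else 3
    with hf
  have f0 : ∀ w : Fin (k + 3), (w : ℕ) = 0 → f w = 0 := by
    intro w hw; simp only [hf]; rw [if_pos hw]
  have f2 : ∀ w : Fin (k + 3), 1 ≤ (w : ℕ) → (w : ℕ) ≤ k → f w = 2 := by
    intro w h1 h2; simp only [hf]; rw [if_neg (by omega), if_pos h2]
  have f1 : ∀ w : Fin (k + 3), (w : ℕ) = k + 1 → f w = 1 := by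
    intro w hw; simp only [hf]; rw [if_neg (by omega), if_neg (by omega), if_pos hw]
  have f3 : ∀ w : Fin (k + 3), (w : ℕ) = k + 2 → f w = 3 := by
    intro w hw; simp only [hf]; rw [if_neg (by omega), if_neg (by omega), if_neg (by omega)]
  have hmapstar : ∀ i : Fin (k + 3), 1 ≤ (i : ℕ) → (i : ℕ) ≤ k →
      Sym2.map f s((⟨0, by omega⟩ : Fin (k + 3)), i) = s(0, 2) := by
    intro i h1 h2
    rw [Sym2.map_pair_eq, f0 _ rfl, f2 _ h1 h2]
  have hmapedge :
      Sym2.map f s((⟨k + 1, by have := hk; omega⟩ : Fin (k + 3)), (⟨k + 2, by have := hk; omega⟩ : Fin (k + 3)))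
        = s(1, 3) := by
    rw [Sym2.map_pair_eq, f1 _ rfl, f3 _ rfl]
  apply geoChrom_eq_four A
  · apply upper A f
    · intro u v h
      rw [hAdj] at h
      rcases h with ⟨i, hi1, hi2, heq⟩ | heq <;> rw [Sym2.eq_iff] at heq <;>
        rcases heq with ⟨rfl, rfl⟩ | ⟨rfl, rfl⟩
      · rw [f0 _ rfl, f2 _ hi1 hi2]; decide
      · rw [f2 _ hi1 hi2, f0 _ rfl]; decide
      · rw [f1 _ rfl, f3 _ rfl]; decide
      · rw [f3 _ rfl, f1 _ rfl]; decide
    · intro e₁ e₂ h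
      rw [hCross] at h
      obtain ⟨i, hi1, hi2, (⟨rfl, rfl⟩ | ⟨rfl, rfl⟩)⟩ := h
      · rw [hmapstar i hi1 hi2, hmapedge]; exact Or.inl ⟨rfl, rfl⟩
      · rw [hmapstar i hi1 hi2, hmapedge]; exact Or.inr ⟨rfl, rfl⟩
  · exact (hCross _ _).2 ⟨⟨1, by omega⟩, le_refl 1, show 1 ≤ k by omega,
      Or.inl ⟨rfl, rfl⟩⟩


variable (k : ℕ)

def Astar (hk : 2 ≤ k) : GeomGraph (Fin (k + 3)) where
  G := { Adj := fun u v =>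
          ((∃ i : Fin (k + 3), 1 ≤ (i : ℕ) ∧ (i : ℕ) ≤ k ∧
              s(u, v) = s((⟨0, by omega⟩ : Fin (k + 3)), i)) ∨
            s(u, v) = s((⟨k + 1, by have := hk; omega⟩ : Fin (k + 3)), (⟨k + 2, by have := hk; omega⟩ : Fin (k + 3))))
         symm := by
          constructor
          intro u v h
          rcases h with ⟨i, h1, h2, heq⟩ | heq
          · exact Or.inl ⟨i, h1, h2, Sym2.eq_swap.trans heq⟩
          · exact Or.inr (Sym2.eq_swap.trans heq)
         loopless := by
          constructor
          intro v h
          rcases h with ⟨i, h1, h2, heq⟩ | heq <;> rw [Sym2.eq_iff] at heq <;>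
            rcases heq with ⟨ha, hb⟩ | ⟨ha, hb⟩ <;>
            (have ha' := congrArg Fin.val ha
             have hb' := congrArg Fin.val hb
             simp only [Fin.val_mk] at ha' hb'
             omega) }
  cross := fun e₁ e₂ =>
    ∃ i : Fin (k + 3), 1 ≤ (i : ℕ) ∧ (i : ℕ) ≤ k ∧
      ((e₁ = s((⟨0, by omega⟩ : Fin (k + 3)), i) ∧
          e₂ = s((⟨k + 1, by have := hk; omega⟩ : Fin (k + 3)), (⟨k + 2, by have := hk; omega⟩ : Fin (k + 3)))) ∨
        (e₂ = s((⟨0, by omega⟩ : Fin (k + 3)), i) ∧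
          e₁ = s((⟨k + 1, by have := hk; omega⟩ : Fin (k + 3)), (⟨k + 2, by have := hk; omega⟩ : Fin (k + 3)))))
  cross_symm := by
    rintro e₁ e₂ ⟨i, h1, h2, h | h⟩
    · exact ⟨i, h1, h2, Or.inr h⟩
    · exact ⟨i, h1, h2, Or.inl h⟩
  cross_mem := by
    rintro e₁ e₂ ⟨i, h1, h2, ⟨rfl, rfl⟩ | ⟨rfl, rfl⟩⟩
    · exact ⟨(SimpleGraph.mem_edgeSet _).2 (Or.inl ⟨i, h1, h2, rfl⟩),
        (SimpleGraph.mem_edgeSet _).2 (Or.inr rfl)⟩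
    · exact ⟨(SimpleGraph.mem_edgeSet _).2 (Or.inr rfl),
        (SimpleGraph.mem_edgeSet _).2 (Or.inl ⟨i, h1, h2, rfl⟩)⟩
  cross_disjoint := by
    rintro e₁ e₂ ⟨i, h1, h2, ⟨rfl, rfl⟩ | ⟨rfl, rfl⟩⟩ v hv <;>
      rw [Sym2.mem_iff] at hv ⊢ <;> push_neg <;>
      rcases hv with rfl | rfl <;>
      constructor <;> intro h <;>
      · have := congrArg Fin.val h
        simp only [Fin.val_mk] at this
        omega

lemma Astar_cross_iff (hk : 2 ≤ k) (e₁ e₂ : Sym2 (Fin (k + 3))) :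
    (Astar k hk).cross e₁ e₂ ↔
      ∃ i : Fin (k + 3), 1 ≤ (i : ℕ) ∧ (i : ℕ) ≤ k ∧
        ((e₁ = s((⟨0, by omega⟩ : Fin (k + 3)), i) ∧
            e₂ = s((⟨k + 1, by have := hk; omega⟩ : Fin (k + 3)), (⟨k + 2, by have := hk; omega⟩ : Fin (k + 3)))) ∨
          (e₂ = s((⟨0, by omega⟩ : Fin (k + 3)), i) ∧
            e₁ = s((⟨k + 1, by have := hk; omega⟩ : Fin (k + 3)), (⟨k + 2, by have := hk; omega⟩ : Fin (k + 3))))) :=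
  Iff.rfl

lemma Astar_adj_iff (hk : 2 ≤ k) (u v : Fin (k + 3)) :
    (Astar k hk).G.Adj u v ↔
      ((∃ i : Fin (k + 3), 1 ≤ (i : ℕ) ∧ (i : ℕ) ≤ k ∧
          s(u, v) = s((⟨0, by omega⟩ : Fin (k + 3)), i)) ∨
        s(u, v) = s((⟨k + 1, by have := hk; omega⟩ : Fin (k + 3)), (⟨k + 2, by have := hk; omega⟩ : Fin (k + 3)))) :=
  Iff.rfl

lemma Astar_count (hk : 2 ≤ k) :
    {q : Sym2 (Sym2 (Fin (k + 3))) | ∃ e₁ e₂, q = s(e₁, e₂) ∧ (Astar k hk).cross e₁ e₂}.ncard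
      = k := by
  have hinj : Function.Injective (fun j : Fin k =>
      s(s((⟨0, by omega⟩ : Fin (k + 3)), (⟨(j : ℕ) + 1, by omega⟩ : Fin (k + 3))),
        s((⟨k + 1, by have := hk; omega⟩ : Fin (k + 3)), (⟨k + 2, by have := hk; omega⟩ : Fin (k + 3))))) := by
    intro j j' h
    simp only [Sym2.eq_iff] at h
    rcases h with ⟨h, -⟩ | ⟨h, -⟩ <;> rcases h with ⟨h1, h2⟩ | ⟨h1, h2⟩ <;>
      first
        | (exact Fin.ext (by have := congrArg Fin.val h2; simp only [] at this; omega))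
        | (have := congrArg Fin.val h1; simp only [] at this; omega)
  have hset : {q : Sym2 (Sym2 (Fin (k + 3))) | ∃ e₁ e₂, q = s(e₁, e₂) ∧ (Astar k hk).cross e₁ e₂}
      = Set.range (fun j : Fin k =>
        s(s((⟨0, by omega⟩ : Fin (k + 3)), (⟨(j : ℕ) + 1, by omega⟩ : Fin (k + 3))),
          s((⟨k + 1, by have := hk; omega⟩ : Fin (k + 3)), (⟨k + 2, by have := hk; omega⟩ : Fin (k + 3))))) := by
    ext q
    simp only [Set.mem_setOf_eq, Set.mem_range]
    constructor
    · rintro ⟨e₁, e₂, rfl, hcr⟩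
      rw [Astar_cross_iff] at hcr
      obtain ⟨i, h1, h2, ⟨rfl, rfl⟩ | ⟨rfl, rfl⟩⟩ := hcr
      · refine ⟨⟨(i : ℕ) - 1, by omega⟩, ?_⟩
        have : (⟨((⟨(i : ℕ) - 1, by omega⟩ : Fin k) : ℕ) + 1, by omega⟩ : Fin (k + 3)) = i :=
          Fin.ext (by simp only []; omega)
        rw [this]
      · refine ⟨⟨(i : ℕ) - 1, by omega⟩, ?_⟩
        have : (⟨((⟨(i : ℕ) - 1, by omega⟩ : Fin k) : ℕ) + 1, by omega⟩ : Fin (k + 3)) = i :=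
          Fin.ext (by simp only []; omega)
        rw [this, Sym2.eq_swap]
    · rintro ⟨j, rfl⟩
      refine ⟨_, _, rfl, ?_⟩
      rw [Astar_cross_iff]
      exact ⟨⟨(j : ℕ) + 1, by omega⟩, by simp, by simp only [Fin.val_mk]; omega, Or.inl ⟨rfl, rfl⟩⟩
  rw [hset, ← Set.image_univ, Set.ncard_image_of_injective _ hinj, Set.ncard_univ,
    Nat.card_eq_fintype_card, Fintype.card_fin]



def A1 : GeomGraph (Fin 4) where
  G := { Adj := fun u v => s(u, v) = s(0, 1) ∨ s(u, v) = s(2, 3)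
         symm := ⟨fun u v h => by
          rcases h with h | h
          · exact Or.inl (Sym2.eq_swap.trans h)
          · exact Or.inr (Sym2.eq_swap.trans h)⟩
         loopless := ⟨fun v h => by
          rcases h with h | h <;> rw [Sym2.eq_iff] at h <;>
            rcases h with ⟨rfl, h⟩ | ⟨rfl, h⟩ <;> exact absurd h (by decide)⟩ }
  cross := fun e₁ e₂ => (e₁ = s(0, 1) ∧ e₂ = s(2, 3)) ∨ (e₂ = s(0, 1) ∧ e₁ = s(2, 3))
  cross_symm := by tauto
  cross_mem := by
    rintro e₁ e₂ (⟨rfl, rfl⟩ | ⟨rfl, rfl⟩)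
    · exact ⟨(SimpleGraph.mem_edgeSet _).2 (Or.inl rfl), (SimpleGraph.mem_edgeSet _).2 (Or.inr rfl)⟩
    · exact ⟨(SimpleGraph.mem_edgeSet _).2 (Or.inr rfl), (SimpleGraph.mem_edgeSet _).2 (Or.inl rfl)⟩
  cross_disjoint := by
    rintro e₁ e₂ (⟨rfl, rfl⟩ | ⟨rfl, rfl⟩) v <;> revert v <;> decide

lemma A1_count :
    {q : Sym2 (Sym2 (Fin 4)) | ∃ e₁ e₂, q = s(e₁, e₂) ∧ A1.cross e₁ e₂}.ncard = 1 := by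
  have : {q : Sym2 (Sym2 (Fin 4)) | ∃ e₁ e₂, q = s(e₁, e₂) ∧ A1.cross e₁ e₂}
      = {s(s((0 : Fin 4), (1 : Fin 4)), s((2 : Fin 4), (3 : Fin 4)))} := by
    ext q
    simp only [Set.mem_setOf_eq, Set.mem_singleton_iff]
    constructor
    · rintro ⟨e₁, e₂, rfl, (⟨rfl, rfl⟩ | ⟨rfl, rfl⟩)⟩
      · rfl
      · exact Sym2.eq_swap
    · rintro rfl
      exact ⟨_, _, rfl, Or.inl ⟨rfl, rfl⟩⟩
  rw [this, Set.ncard_singleton]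

lemma A1_geoChrom : geoChrom A1 = 4 := by
  apply geoChrom_eq_four A1 _ s(0, 1) s(2, 3) (Or.inl ⟨rfl, rfl⟩)
  apply upper A1 ![0, 2, 1, 3]
  · intro u v h
    rcases h with h | h <;> rw [Sym2.eq_iff] at h <;>
      rcases h with ⟨rfl, rfl⟩ | ⟨rfl, rfl⟩ <;> decide
  · rintro e₁ e₂ (⟨rfl, rfl⟩ | ⟨rfl, rfl⟩) <;>
      rw [Sym2.map_pair_eq, Sym2.map_pair_eq] <;>
      first
        | exact Or.inl ⟨by decide, by decide⟩
        | exact Or.inr ⟨by decide, by decide⟩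




end GeoAux

/-- For every `k ≥ 1` there is a geometric graph with exactly `k` crossings and
geochromatic number 4; concretely, for `k ≥ 2`, the star `K_{1,k}` with center `0`
and leaves `1, …, k` together with an edge `{k+1, k+2}` crossing all `k` star edges
(and no other crossings) has geochromatic number 4. -/
theorem exists_geoChrom_four_with_k_crossings :
    (∀ k : ℕ, 1 ≤ k → ∃ (m : ℕ) (A : GeomGraph (Fin m)),
      {q : Sym2 (Sym2 (Fin m)) | ∃ e₁ e₂, q = s(e₁, e₂) ∧ A.cross e₁ e₂}.ncard = k ∧
      geoChrom A = 4) ∧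
    (∀ k : ℕ, 2 ≤ k → ∀ A : GeomGraph (Fin (k + 3)),
      (∀ u v : Fin (k + 3), A.G.Adj u v ↔
        ((∃ i : Fin (k + 3), 1 ≤ (i : ℕ) ∧ (i : ℕ) ≤ k ∧
            s(u, v) = s((⟨0, by omega⟩ : Fin (k + 3)), i)) ∨
          s(u, v) = s((⟨k + 1, by omega⟩ : Fin (k + 3)), (⟨k + 2, by omega⟩ : Fin (k + 3))))) →
      (∀ e₁ e₂ : Sym2 (Fin (k + 3)), A.cross e₁ e₂ ↔
        (∃ i : Fin (k + 3), 1 ≤ (i : ℕ) ∧ (i : ℕ) ≤ k ∧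
          ((e₁ = s((⟨0, by omega⟩ : Fin (k + 3)), i) ∧
              e₂ = s((⟨k + 1, by omega⟩ : Fin (k + 3)), (⟨k + 2, by omega⟩ : Fin (k + 3)))) ∨
            (e₂ = s((⟨0, by omega⟩ : Fin (k + 3)), i) ∧
              e₁ = s((⟨k + 1, by omega⟩ : Fin (k + 3)), (⟨k + 2, by omega⟩ : Fin (k + 3))))))) →
      geoChrom A = 4) := by
  constructor
  · intro k hk
    rcases Nat.lt_or_ge k 2 with h | h
    · have hk1 : k = 1 := by omega
      subst hk1
      exact ⟨4, GeoAux.A1, GeoAux.A1_count, GeoAux.A1_geoChrom⟩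
    · exact ⟨k + 3, GeoAux.Astar k h, GeoAux.Astar_count k h,
        GeoAux.part2 k h (GeoAux.Astar k h) (GeoAux.Astar_adj_iff k h)
          (GeoAux.Astar_cross_iff k h)⟩
  · exact GeoAux.part2
end

section
/- Let G be a geometric graph in which every two distinct crossings are vertex-disjoint and, moreover, no crossing vertex of one crossing is adjacent to a crossing vertex of a different crossing (i.e., all crossings are at distance at least 2). Then X(G) ≤ χ(G) + 2, where χ(G) is the chromatic number of the underlying abstract graph. -/
/-! ### Geometric lemmas about points on the parabola -/

theorem parabola_cross (x1 x2 x3 x4 : ℝ) (h12 : x1 < x2) (h23 : x2 < x3) (h34 : x3 < x4) :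
    (openSegment ℝ ((x1, x1^2) : ℝ × ℝ) (x3, x3^2) ∩
      openSegment ℝ ((x2, x2^2) : ℝ × ℝ) (x4, x4^2)).Nonempty := by
  have hd : (0:ℝ) < x2 + x4 - x1 - x3 := by linarith
  set d : ℝ := x2 + x4 - x1 - x3 with hdd
  set xs : ℝ := (x2*x4 - x1*x3)/d with hxs
  have h13 : x3 - x1 > 0 := by linarith
  have h24 : x4 - x2 > 0 := by linarith
  have hA : xs - x1 = (x2-x1)*(x4-x1)/d := by rw [hxs]; field_simp; ring
  have hB : x3 - xs = (x3-x2)*(x4-x3)/d := by rw [hxs]; field_simp; ring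
  have hC : xs - x2 = (x2-x1)*(x3-x2)/d := by rw [hxs]; field_simp; ring
  have hD : x4 - xs = (x4-x1)*(x4-x3)/d := by rw [hxs]; field_simp; ring
  have h1 : x1 < xs := by nlinarith [div_pos (by nlinarith : (0:ℝ) < (x2-x1)*(x4-x1)) hd]
  have h3 : xs < x3 := by nlinarith [div_pos (by nlinarith : (0:ℝ) < (x3-x2)*(x4-x3)) hd]
  have h2 : x2 < xs := by nlinarith [div_pos (by nlinarith : (0:ℝ) < (x2-x1)*(x3-x2)) hd]
  have h4 : xs < x4 := by nlinarith [div_pos (by nlinarith : (0:ℝ) < (x4-x1)*(x4-x3)) hd]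
  have hds : d * xs = x2*x4 - x1*x3 := by rw [hxs]; field_simp
  refine ⟨(xs, (x1+x3)*xs - x1*x3), ?_, ?_⟩
  · rw [openSegment_eq_image]
    refine ⟨(xs - x1)/(x3 - x1), ⟨div_pos (by linarith) h13, by rw [div_lt_one h13]; linarith⟩, ?_⟩
    have h0 : x3 - x1 ≠ 0 := by linarith
    ext
    · simp [Prod.smul_mk]; field_simp; ring
    · simp [Prod.smul_mk]; field_simp; ring
  · rw [openSegment_eq_image]
    refine ⟨(xs - x2)/(x4 - x2), ⟨div_pos (by linarith) h24, by rw [div_lt_one h24]; linarith⟩, ?_⟩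
    have h0 : x4 - x2 ≠ 0 := by linarith
    ext
    · simp [Prod.smul_mk]; field_simp; ring
    · simp [Prod.smul_mk]; field_simp; linear_combination (x4 - x2) * hds

theorem parabola_noncol (x y z : ℝ) (hxy : x ≠ y) (hyz : y ≠ z) (hxz : x ≠ z) :
    ¬ Collinear ℝ ({(x,x^2),(y,y^2),(z,z^2)} : Set (ℝ × ℝ)) := by
  intro h
  rw [collinear_iff_of_mem (by simp : ((x,x^2) : ℝ×ℝ) ∈ _)] at h
  obtain ⟨v, hv⟩ := h
  obtain ⟨ry, hy⟩ := hv (y, y^2) (by simp)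
  obtain ⟨rz, hz⟩ := hv (z, z^2) (by simp)
  have hy1 : y - x = ry * v.1 := by
    have := congrArg Prod.fst hy; simp [Prod.smul_mk] at this; linarith
  have hy2 : y^2 - x^2 = ry * v.2 := by
    have := congrArg Prod.snd hy; simp [Prod.smul_mk] at this; linarith
  have hz1 : z - x = rz * v.1 := by
    have := congrArg Prod.fst hz; simp [Prod.smul_mk] at this; linarith
  have hz2 : z^2 - x^2 = rz * v.2 := by
    have := congrArg Prod.snd hz; simp [Prod.smul_mk] at this; linarith
  have key : (y - x) * (z^2 - x^2) = (z - x) * (y^2 - x^2) := by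
    rw [hy1, hz2, hz1, hy2]; ring
  have : (y - x) * (z - x) * (z - y) = 0 := by nlinarith [key]
  rcases mul_eq_zero.1 this with h | h
  · rcases mul_eq_zero.1 h with h | h
    · exact hxy (by linarith)
    · exact hxz (by linarith)
  · exact hyz (by linarith)

/-! ### The convex realization of `K n` -/

noncomputable section

def pp {n : ℕ} (i : Fin n) : ℝ × ℝ := ((i:ℝ), (i:ℝ)^2)

def segSet {n : ℕ} : Sym2 (Fin n) → Set (ℝ × ℝ) :=
  Sym2.lift ⟨fun a b => openSegment ℝ (pp a) (pp b), fun a b => openSegment_symm ℝ _ _⟩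

@[simp] lemma segSet_mk {n : ℕ} (a b : Fin n) :
    segSet s(a, b) = openSegment ℝ (pp a) (pp b) := rfl

def convexK (n : ℕ) : GeomGraph (Fin n) where
  G := ⊤
  cross e₁ e₂ := e₁ ∈ (⊤ : SimpleGraph (Fin n)).edgeSet ∧ e₂ ∈ (⊤ : SimpleGraph (Fin n)).edgeSet ∧
    (∀ v, v ∈ e₁ → v ∉ e₂) ∧ (segSet e₁ ∩ segSet e₂).Nonempty
  cross_symm := by
    rintro e₁ e₂ ⟨h1, h2, h3, h4⟩
    refine ⟨h2, h1, fun v hv hv' => h3 v hv' hv, ?_⟩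
    rwa [Set.inter_comm]
  cross_mem := fun e₁ e₂ h => ⟨h.1, h.2.1⟩
  cross_disjoint := fun e₁ e₂ h => h.2.2.1

lemma ppval_inj {n : ℕ} : Function.Injective (fun i : Fin n => ((i:ℕ):ℝ)) := by
  intro i j h
  simp only [Nat.cast_inj] at h
  exact Fin.val_injective h

theorem convexK_real (n : ℕ) : IsRealizationOfK n (convexK n) := by
  refine ⟨rfl, pp, ?_, ?_, ?_⟩
  · intro i j h
    exact ppval_inj (congrArg Prod.fst h)
  · intro i j k hij hjk hik
    exact parabola_noncol _ _ _ (fun h => hij (ppval_inj h)) (fun h => hjk (ppval_inj h))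
      (fun h => hik (ppval_inj h))
  · intro a b c d hab hcd
    show (_ ∧ _ ∧ _ ∧ _) ↔ _
    constructor
    · rintro ⟨h1, h2, h3, h4⟩
      have hac : a ≠ c := fun h => h3 a (by simp) (by simp [h])
      have had : a ≠ d := fun h => h3 a (by simp) (by simp [h])
      have hbc : b ≠ c := fun h => h3 b (by simp) (by simp [h])
      have hbd : b ≠ d := fun h => h3 b (by simp) (by simp [h])
      exact ⟨hac, had, hbc, hbd, by simpa using h4⟩
    · rintro ⟨hac, had, hbc, hbd, hseg⟩
      refine ⟨by simpa using hab, by simpa using hcd, ?_, by simpa using hseg⟩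
      intro v hv hv'
      rw [Sym2.mem_iff] at hv hv'
      rcases hv with rfl | rfl <;> rcases hv' with h | h <;> simp_all

theorem convexK_cross_of_interleave {n : ℕ} (a b c d : Fin n)
    (hab : a < b) (hbc : b < c) (hcd : c < d) :
    (convexK n).cross s(a, c) s(b, d) := by
  have h1 : ((a:ℕ):ℝ) < ((b:ℕ):ℝ) := by exact_mod_cast hab
  have h2 : ((b:ℕ):ℝ) < ((c:ℕ):ℝ) := by exact_mod_cast hbc
  have h3 : ((c:ℕ):ℝ) < ((d:ℕ):ℝ) := by exact_mod_cast hcd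
  have hac : a ≠ c := (hab.trans hbc).ne
  have hbd : b ≠ d := (hbc.trans hcd).ne
  have had : a ≠ d := ((hab.trans hbc).trans hcd).ne
  refine ⟨by simp [hac], by simp [hbd], ?_, ?_⟩
  · intro v hv hv'
    rw [Sym2.mem_iff] at hv hv'
    rcases hv with h | h <;> rcases hv' with h' | h' <;> rw [h] at h'
    · exact hab.ne h'
    · exact had h'
    · exact hbc.ne' h'
    · exact hcd.ne h'
  · simpa [pp] using parabola_cross _ _ _ _ h1 h2 h3

/-! ### Keeper machinery -/

variable {V : Type*} [LinearOrder V] {k : ℕ}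

def vmin (c : V → Fin k) : Sym2 V → V :=
  Sym2.lift ⟨fun a b => if c a < c b then a else if c b < c a then b else min a b, by
    intro a b
    rcases lt_trichotomy (c a) (c b) with h | h | h
    · simp [h, h.asymm, h.not_gt]
    · simp [h, min_comm]
    · simp [h, h.asymm, h.not_gt]⟩

def vmax (c : V → Fin k) : Sym2 V → V :=
  Sym2.lift ⟨fun a b => if c a < c b then b else if c b < c a then a else max a b, by
    intro a b
    rcases lt_trichotomy (c a) (c b) with h | h | h
    · simp [h, h.asymm, h.not_gt]
    · simp [h, max_comm]
    · simp [h, h.asymm, h.not_gt]⟩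

def minV : Sym2 V → V := Sym2.lift ⟨fun a b => min a b, fun a b => min_comm a b⟩

lemma vmin_mem (c : V → Fin k) (e : Sym2 V) : vmin c e ∈ e := by
  induction e using Sym2.ind with
  | _ a b =>
    simp only [vmin, Sym2.lift_mk]
    split_ifs
    · simp
    · simp
    · rcases min_cases a b with ⟨h, _⟩ | ⟨h, _⟩ <;> simp [h]

lemma vmax_mem (c : V → Fin k) (e : Sym2 V) : vmax c e ∈ e := by
  induction e using Sym2.ind with
  | _ a b =>
    simp only [vmax, Sym2.lift_mk]
    split_ifs
    · simp
    · simp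
    · rcases max_cases a b with ⟨h, _⟩ | ⟨h, _⟩ <;> simp [h]

lemma minV_mem (e : Sym2 V) : minV e ∈ e := by
  induction e using Sym2.ind with
  | _ a b =>
    simp only [minV, Sym2.lift_mk]
    rcases min_cases a b with ⟨h, _⟩ | ⟨h, _⟩ <;> simp [h]

lemma vmin_vmax_of_lt (c : V → Fin k) {a b : V} (h : c a < c b) :
    vmin c s(a, b) = a ∧ vmax c s(a, b) = b := by
  constructor <;> simp [vmin, vmax, h]

lemma vmin_vmax_pair (c : V → Fin k) {a b : V} (h : c a ≠ c b) :
    (vmin c s(a, b) = a ∧ vmax c s(a, b) = b) ∨ (vmin c s(a, b) = b ∧ vmax c s(a, b) = a) := by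
  rcases h.lt_or_gt with h' | h'
  · exact Or.inl (vmin_vmax_of_lt c h')
  · rw [Sym2.eq_swap]
    exact Or.inr (vmin_vmax_of_lt c h')

lemma c_vmin_ne_vmax (c : V → Fin k) {a b : V} (h : c a ≠ c b) :
    c (vmin c s(a, b)) ≠ c (vmax c s(a, b)) := by
  rcases vmin_vmax_pair c h with ⟨h1, h2⟩ | ⟨h1, h2⟩ <;> rw [h1, h2]
  · exact h
  · exact h.symm

def keeper (c : V → Fin k) (e e' : Sym2 V) : V :=
  if c (vmin c e) ≠ c (vmin c e') then vmin c e
  else if c (vmax c e) ≠ c (vmax c e') then vmax c e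
  else if minV e ≤ minV e' then vmin c e else vmax c e

lemma keeper_mem (c : V → Fin k) (e e' : Sym2 V) : keeper c e e' ∈ e := by
  unfold keeper
  split_ifs <;> first | exact vmin_mem c e | exact vmax_mem c e

lemma keeper_ne (c : V → Fin k) {e e' : Sym2 V}
    (he : c (vmin c e) ≠ c (vmax c e))
    (hdisj : ∀ v, v ∈ e → v ∉ e') :
    c (keeper c e e') ≠ c (keeper c e' e) := by
  have hmV : ¬ (minV e' ≤ minV e ∧ minV e ≤ minV e') := by
    rintro ⟨h1, h2⟩
    have hh : minV e ∈ e' := by rw [le_antisymm h2 h1]; exact minV_mem e'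
    exact hdisj (minV e) (minV_mem e) hh
  unfold keeper
  by_cases h1 : c (vmin c e) ≠ c (vmin c e')
  · rw [if_pos h1, if_pos (Ne.symm h1)]; exact h1
  · rw [if_neg h1]
    have h1' : ¬ c (vmin c e') ≠ c (vmin c e) := fun h => h1 h.symm
    rw [if_neg h1']
    by_cases h2 : c (vmax c e) ≠ c (vmax c e')
    · rw [if_pos h2, if_pos (Ne.symm h2)]; exact h2
    · rw [if_neg h2]
      have h2' : ¬ c (vmax c e') ≠ c (vmax c e) := fun h => h2 h.symm
      rw [if_neg h2']
      push_neg at h1 h2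
      by_cases h3 : minV e ≤ minV e'
      · rw [if_pos h3, if_neg (fun h => hmV ⟨h, h3⟩)]
        rw [← h2]; exact he
      · rw [if_neg h3, if_pos (le_of_not_ge h3)]
        rw [← h1]; exact fun h => he h.symm

end

/-! ### The key construction -/

theorem key_mem_geoSet {V : Type*} (A : GeomGraph V)
    (hdist : ∀ e₁ e₂ f₁ f₂, A.cross e₁ e₂ → A.cross f₁ f₂ →
      ¬ ((e₁ = f₁ ∧ e₂ = f₂) ∨ (e₁ = f₂ ∧ e₂ = f₁)) →
      ∀ u v, (u ∈ e₁ ∨ u ∈ e₂) → (v ∈ f₁ ∨ v ∈ f₂) → u ≠ v ∧ ¬ A.G.Adj u v)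
    {k : ℕ} (c : V → Fin k) (hc : ∀ u v, A.G.Adj u v → c u ≠ c v) :
    (k + 2) ∈ geoSet A := by
  classical
  letI : LinearOrder V := linearOrderOfSTO WellOrderingRel
  -- uniqueness of the crossing through a vertex
  have U : ∀ {e e' g g' : Sym2 V} {v : V}, A.cross e e' → v ∈ e → A.cross g g' → v ∈ g →
      e = g ∧ e' = g' := by
    intro e e' g g' v h1 hv1 h2 hv2
    by_cases hp : (e = g ∧ e' = g') ∨ (e = g' ∧ e' = g)
    · rcases hp with ⟨h3, h4⟩ | ⟨h3, h4⟩
      · exact ⟨h3, h4⟩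
      · exfalso
        exact A.cross_disjoint g g' h2 v hv2 (h3 ▸ hv1)
    · exact absurd rfl (hdist e e' g g' h1 h2 hp v v (Or.inl hv1) (Or.inl hv2)).1
  have edgeRep : ∀ {e : Sym2 V}, e ∈ A.G.edgeSet → ∃ a b, e = s(a,b) ∧ A.G.Adj a b := by
    intro e
    induction e using Sym2.ind with
    | _ a b => exact fun he => ⟨a, b, rfl, he⟩
  have edgeCol : ∀ {e e' : Sym2 V}, A.cross e e' → c (vmin c e) ≠ c (vmax c e) := by
    intro e e' h
    obtain ⟨a, b, rfl, hab⟩ := edgeRep (A.cross_mem _ _ h).1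
    exact c_vmin_ne_vmax c (hc a b hab)
  have two_mem : ∀ {e : Sym2 V} {u v w : V}, u ∈ e → v ∈ e → w ∈ e → u ≠ v → w = u ∨ w = v := by
    intro e
    induction e using Sym2.ind with
    | _ a b =>
      intro u v w hu hv hw huv
      rw [Sym2.mem_iff] at hu hv hw
      rcases hu with rfl | rfl <;> rcases hv with rfl | rfl <;> tauto
  -- choice of the crossing through a vertex
  have hex : ∀ v : V, (∃ e e', A.cross e e' ∧ v ∈ e) → ∃ e e', A.cross e e' ∧ v ∈ e := fun v h => h
  choose own opp spec using hex
  have ownEq : ∀ {v : V} (h : ∃ e e', A.cross e e' ∧ v ∈ e) {e e' : Sym2 V},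
      A.cross e e' → v ∈ e → own v h = e ∧ opp v h = e' := by
    intro v h e e' hx hv
    exact U (spec v h).1 (spec v h).2 hx hv
  -- the coloring
  set K0 : Fin (k+2) := (Fin.last k).castSucc with hK0
  set K1 : Fin (k+2) := Fin.last (k+1) with hK1
  set kc : Fin k → Fin (k+2) := Fin.castLE (by omega) with hkc
  set f : V → Fin (k+2) := fun v =>
    if h : ∃ e e', A.cross e e' ∧ v ∈ e then
      if v = keeper c (own v h) (opp v h) then kc (c v)
      else if c (keeper c (own v h) (opp v h)) < c (keeper c (opp v h) (own v h))
        then K0 else K1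
    else kc (c v) with hf
  -- value lemmas
  have fval_keep : ∀ {e e' u}, A.cross e e' → u ∈ e → u = keeper c e e' → f u = kc (c u) := by
    intro e e' u hx hu heq
    have h : ∃ e e', A.cross e e' ∧ u ∈ e := ⟨e, e', hx, hu⟩
    obtain ⟨h1, h2⟩ := ownEq h hx hu
    rw [hf]
    simp only [dif_pos h, h1, h2, if_pos heq]
  have fval_new : ∀ {e e' u}, A.cross e e' → u ∈ e → u ≠ keeper c e e' →
      f u = if c (keeper c e e') < c (keeper c e' e) then K0 else K1 := by
    intro e e' u hx hu heq
    have h : ∃ e e', A.cross e e' ∧ u ∈ e := ⟨e, e', hx, hu⟩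
    obtain ⟨h1, h2⟩ := ownEq h hx hu
    rw [hf]
    simp only [dif_pos h, h1, h2, if_neg heq]
  have fval_non : ∀ {u}, ¬ (∃ e e', A.cross e e' ∧ u ∈ e) → f u = kc (c u) := by
    intro u h
    rw [hf]; simp only [dif_neg h]
  have kc_lt : ∀ x : Fin k, (kc x : Fin (k+2)).val < k := fun x => x.2
  have hK0v : (K0 : Fin (k+2)).val = k := rfl
  have hK1v : (K1 : Fin (k+2)).val = k + 1 := rfl
  have new_mem : ∀ (b : Prop) [Decidable b], ((if b then K0 else K1) : Fin (k+2)).val ≥ k := by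
    intro b _; split_ifs <;> omega
  have kc_inj : Function.Injective kc := Fin.castLE_injective _
  -- adjacency preservation
  have hadj : ∀ u v, A.G.Adj u v → f u ≠ f v := by
    intro u v huv
    have hne : u ≠ v := huv.ne
    by_cases hu : ∃ e e', A.cross e e' ∧ u ∈ e
    · by_cases hv : ∃ e e', A.cross e e' ∧ v ∈ e
      · obtain ⟨hxu, hmu⟩ := spec u hu
        obtain ⟨hxv, hmv⟩ := spec v hv
        by_cases hp : (own u hu = own v hv ∧ opp u hu = opp v hv) ∨
            (own u hu = opp v hv ∧ opp u hu = own v hv)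
        · rcases hp with ⟨h1, h2⟩ | ⟨h1, h2⟩
          · -- same edge
            have hmv' : v ∈ own u hu := by rw [h1]; exact hmv
            by_cases hku : u = keeper c (own u hu) (opp u hu) <;>
              by_cases hkv : v = keeper c (own u hu) (opp u hu)
            · exact absurd (hku.trans hkv.symm) hne
            · rw [fval_keep hxu hmu hku, fval_new hxu hmv' hkv]
              have t1 := kc_lt (c u)
              have t2 := new_mem (c (keeper c (own u hu) (opp u hu)) <
                c (keeper c (opp u hu) (own u hu)))
              intro hh; rw [hh] at t1; omega
            · rw [fval_new hxu hmu hku, fval_keep hxu hmv' hkv]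
              have t1 := kc_lt (c v)
              have t2 := new_mem (c (keeper c (own u hu) (opp u hu)) <
                c (keeper c (opp u hu) (own u hu)))
              intro hh; rw [← hh] at t1; omega
            · rcases two_mem hmu hmv' (keeper_mem c (own u hu) (opp u hu)) hne with h | h
              · exact absurd h.symm hku
              · exact absurd h.symm hkv
          · -- opposite edges
            have hmv' : v ∈ opp u hu := by rw [h2]; exact hmv
            have hkne : c (keeper c (own u hu) (opp u hu)) ≠
                c (keeper c (opp u hu) (own u hu)) :=
              keeper_ne c (edgeCol hxu) (A.cross_disjoint _ _ hxu)
            have hxu' : A.cross (opp u hu) (own u hu) := A.cross_symm _ _ hxu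
            by_cases hku : u = keeper c (own u hu) (opp u hu) <;>
              by_cases hkv : v = keeper c (opp u hu) (own u hu)
            · rw [fval_keep hxu hmu hku, fval_keep hxu' hmv' hkv]
              intro hh
              exact hkne (hku ▸ hkv ▸ kc_inj hh)
            · rw [fval_keep hxu hmu hku, fval_new hxu' hmv' hkv]
              have t1 := kc_lt (c u)
              have t2 := new_mem (c (keeper c (opp u hu) (own u hu)) <
                c (keeper c (own u hu) (opp u hu)))
              intro hh; rw [hh] at t1; omega
            · rw [fval_new hxu hmu hku, fval_keep hxu' hmv' hkv]
              have t1 := kc_lt (c v)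
              have t2 := new_mem (c (keeper c (own u hu) (opp u hu)) <
                c (keeper c (opp u hu) (own u hu)))
              intro hh; rw [← hh] at t1; omega
            · rw [fval_new hxu hmu hku, fval_new hxu' hmv' hkv]
              rcases hkne.lt_or_gt with h | h
              · rw [if_pos h, if_neg h.asymm]
                intro hh
                have := congrArg Fin.val hh
                rw [hK0v, hK1v] at this; omega
              · rw [if_neg h.asymm, if_pos h]
                intro hh
                have := congrArg Fin.val hh
                rw [hK0v, hK1v] at this; omega
        · exact absurd huv (hdist _ _ _ _ hxu hxv hp u v (Or.inl hmu) (Or.inl hmv)).2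
      · obtain ⟨hxu, hmu⟩ := spec u hu
        rw [fval_non hv]
        by_cases hku : u = keeper c (own u hu) (opp u hu)
        · rw [fval_keep hxu hmu hku]
          exact fun hh => hc u v huv (kc_inj hh)
        · rw [fval_new hxu hmu hku]
          have t1 := kc_lt (c v)
          have t2 := new_mem (c (keeper c (own u hu) (opp u hu)) <
            c (keeper c (opp u hu) (own u hu)))
          intro hh; rw [← hh] at t1; omega
    · rw [fval_non hu]
      by_cases hv : ∃ e e', A.cross e e' ∧ v ∈ e
      · obtain ⟨hxv, hmv⟩ := spec v hv
        by_cases hkv : v = keeper c (own v hv) (opp v hv)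
        · rw [fval_keep hxv hmv hkv]
          exact fun hh => hc u v huv (kc_inj hh)
        · rw [fval_new hxv hmv hkv]
          have t1 := kc_lt (c u)
          have t2 := new_mem (c (keeper c (own v hv) (opp v hv)) <
            c (keeper c (opp v hv) (own v hv)))
          intro hh; rw [hh] at t1; omega
      · rw [fval_non hv]
        exact fun hh => hc u v huv (kc_inj hh)
  -- image of a crossing edge
  have mapEdge : ∀ {e e' : Sym2 V}, A.cross e e' →
      Sym2.map f e = s(kc (c (keeper c e e')),
        if c (keeper c e e') < c (keeper c e' e) then K0 else K1) := by
    intro e e' hx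
    obtain ⟨a, b, rfl, hab⟩ := edgeRep (A.cross_mem _ _ hx).1
    have hab' : a ≠ b := hab.ne
    have hk := keeper_mem c s(a,b) e'
    rw [Sym2.mem_iff] at hk
    rcases hk with hk | hk
    · have hbk : b ≠ keeper c s(a,b) e' := fun h => hab' (h.trans hk).symm
      rw [Sym2.map_pair_eq, fval_keep hx (by simp) hk.symm, fval_new hx (by simp) hbk, hk]
    · have hak : a ≠ keeper c s(a,b) e' := fun h => hab' (h.trans hk)
      rw [Sym2.map_pair_eq, fval_keep hx (by simp) hk.symm, fval_new hx (by simp) hak, hk,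
        Sym2.eq_swap]
  -- assemble
  refine ⟨convexK (k+2), convexK_real _, f, ?_, ?_⟩
  · intro a b hab
    show (⊤ : SimpleGraph (Fin (k+2))).Adj (f a) (f b)
    rw [SimpleGraph.top_adj]
    exact hadj a b hab
  · intro E E' hx
    have hx' : A.cross E' E := A.cross_symm _ _ hx
    have hkne : c (keeper c E E') ≠ c (keeper c E' E) :=
      keeper_ne c (edgeCol hx) (A.cross_disjoint _ _ hx)
    rw [mapEdge hx, mapEdge hx']
    rcases hkne.lt_or_gt with h | h
    · rw [if_pos h, if_neg h.asymm]
      refine convexK_cross_of_interleave _ _ _ _ ?_ ?_ ?_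
      · exact h
      · exact (c (keeper c E' E)).2
      · rw [hK0, hK1]
        simp [Fin.lt_def]
    · rw [if_neg h.asymm, if_pos h]
      refine (convexK (k+2)).cross_symm _ _ ?_
      refine convexK_cross_of_interleave _ _ _ _ ?_ ?_ ?_
      · exact h
      · exact (c (keeper c E E')).2
      · rw [hK0, hK1]
        simp [Fin.lt_def]

/-- If all pairs of distinct crossings in `G` are at distance at least 2 (their
crossing vertices are distinct and pairwise non-adjacent), then `X(G) ≤ χ(G) + 2`. -/
theorem geoChrom_le_chromaticNumber_add_two {V : Type*} (A : GeomGraph V)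
    (hdist : ∀ e₁ e₂ f₁ f₂, A.cross e₁ e₂ → A.cross f₁ f₂ →
      ¬ ((e₁ = f₁ ∧ e₂ = f₂) ∨ (e₁ = f₂ ∧ e₂ = f₁)) →
      ∀ u v, (u ∈ e₁ ∨ u ∈ e₂) → (v ∈ f₁ ∨ v ∈ f₂) → u ≠ v ∧ ¬ A.G.Adj u v) :
    (geoChrom A : ℕ∞) ≤ A.G.chromaticNumber + 2 := by
  by_cases hχ : A.G.chromaticNumber = ⊤
  · rw [hχ]
    simp [top_add]
  · obtain ⟨k, hk⟩ : ∃ k : ℕ, A.G.chromaticNumber = (k : ℕ∞) := by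
    -- chromaticNumber ≠ ⊤
      lift A.G.chromaticNumber to ℕ using hχ with k hk
      exact ⟨k, rfl⟩
    have hcol : A.G.Colorable k := SimpleGraph.chromaticNumber_le_iff_colorable.mp hk.le
    obtain ⟨C⟩ := hcol
    have hmem : (k + 2) ∈ geoSet A :=
      key_mem_geoSet A hdist (fun v => C v) (fun u v h => C.valid h)
    have : geoChrom A ≤ k + 2 := Nat.sInf_le hmem
    calc (geoChrom A : ℕ∞) ≤ ((k + 2 : ℕ) : ℕ∞) := by exact_mod_cast this
      _ = A.G.chromaticNumber + 2 := by rw [hk]; push_cast; rfl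
end

section
/- Let G be a geometric graph with independent crossings whose underlying abstract graph is bipartite (χ(G) ≤ 2, with at least one edge). Then X(G) ≤ 4. -/
private def GC4pts : Fin 4 → ℝ × ℝ := fun i =>
  if i.val = 0 then (0,0) else if i.val = 1 then (1,0) else if i.val = 2 then (1,1) else (0,1)

private def GC4cross : Sym2 (Fin 4) → Sym2 (Fin 4) → Prop := fun e f =>
  (e = s(0,2) ∧ f = s(1,3)) ∨ (e = s(1,3) ∧ f = s(0,2))

private instance : DecidableRel GC4cross := fun _ _ => by unfold GC4cross; infer_instance

private lemma GC4mid_mem (P Q : ℝ × ℝ) : (2⁻¹ : ℝ) • (P + Q) ∈ openSegment ℝ P Q :=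
  ⟨2⁻¹, 2⁻¹, by norm_num, by norm_num, by norm_num, by rw [smul_add]⟩

private lemma GC4cross_nonempty {P Q R S : ℝ × ℝ} (h : P + Q = R + S) :
    (openSegment ℝ P Q ∩ openSegment ℝ R S).Nonempty :=
  ⟨_, GC4mid_mem P Q, h ▸ GC4mid_mem R S⟩

private lemma GC4seg_snd {P Q : ℝ × ℝ} {r : ℝ} (hP : P.2 = r) (hQ : Q.2 = r) {x : ℝ × ℝ}
    (hx : x ∈ openSegment ℝ P Q) : x.2 = r := by
  obtain ⟨a, b, ha, hb, hab, h⟩ := hx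
  have : x.2 = a * P.2 + b * Q.2 := by rw [← h]; rfl
  rw [this, hP, hQ, ← add_mul, hab, one_mul]

private lemma GC4seg_fst {P Q : ℝ × ℝ} {r : ℝ} (hP : P.1 = r) (hQ : Q.1 = r) {x : ℝ × ℝ}
    (hx : x ∈ openSegment ℝ P Q) : x.1 = r := by
  obtain ⟨a, b, ha, hb, hab, h⟩ := hx
  have : x.1 = a * P.1 + b * Q.1 := by rw [← h]; rfl
  rw [this, hP, hQ, ← add_mul, hab, one_mul]

private lemma GC4disj_snd {P Q R S : ℝ × ℝ} {r s : ℝ} (hP : P.2 = r) (hQ : Q.2 = r)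
    (hR : R.2 = s) (hS : S.2 = s) (hrs : r ≠ s) :
    ¬ (openSegment ℝ P Q ∩ openSegment ℝ R S).Nonempty := by
  rintro ⟨x, h1, h2⟩
  exact hrs ((GC4seg_snd hP hQ h1).symm.trans (GC4seg_snd hR hS h2))

private lemma GC4disj_fst {P Q R S : ℝ × ℝ} {r s : ℝ} (hP : P.1 = r) (hQ : Q.1 = r)
    (hR : R.1 = s) (hS : S.1 = s) (hrs : r ≠ s) :
    ¬ (openSegment ℝ P Q ∩ openSegment ℝ R S).Nonempty := by
  rintro ⟨x, h1, h2⟩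
  exact hrs ((GC4seg_fst hP hQ h1).symm.trans (GC4seg_fst hR hS h2))

set_option maxHeartbeats 4000000 in
private lemma GC4key : ∀ a b c d : Fin 4, a ≠ b → c ≠ d →
    (GC4cross s(a, b) s(c, d) ↔
      a ≠ c ∧ a ≠ d ∧ b ≠ c ∧ b ≠ d ∧
        (openSegment ℝ (GC4pts a) (GC4pts b) ∩ openSegment ℝ (GC4pts c) (GC4pts d)).Nonempty) := by
  intro a b c d hab hcd
  fin_cases a <;> fin_cases b <;> fin_cases c <;> fin_cases d <;>
    first
    | exact absurd rfl hab
    | exact absurd rfl hcd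
    | exact iff_of_true (by decide) ⟨by decide, by decide, by decide, by decide,
        GC4cross_nonempty (by norm_num [GC4pts, Prod.ext_iff])⟩
    | exact iff_of_false (by decide) (fun h => absurd h.1 (by decide))
    | exact iff_of_false (by decide) (fun h => absurd h.2.1 (by decide))
    | exact iff_of_false (by decide) (fun h => absurd h.2.2.1 (by decide))
    | exact iff_of_false (by decide) (fun h => absurd h.2.2.2.1 (by decide))
    | (refine iff_of_false (by decide) (fun h => absurd h.2.2.2.2 ?_)
       norm_num only [GC4pts]
       first
       | exact GC4disj_snd rfl rfl rfl rfl (by norm_num)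
       | exact GC4disj_fst rfl rfl rfl rfl (by norm_num))

private lemma GC4pts_inj : Function.Injective GC4pts := by
  intro i j h
  fin_cases i <;> fin_cases j <;>
    first
    | rfl
    | (exfalso; rw [Prod.ext_iff] at h; norm_num [GC4pts] at h)

private lemma GC4not_collinear {a b c : ℝ × ℝ}
    (h : (b.1 - a.1) * (c.2 - a.2) - (b.2 - a.2) * (c.1 - a.1) ≠ 0) :
    ¬ Collinear ℝ ({a, b, c} : Set (ℝ × ℝ)) := by
  intro hc
  rw [collinear_iff_of_mem (Set.mem_insert a _)] at hc
  obtain ⟨v, hv⟩ := hc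
  obtain ⟨r, hr⟩ := hv b (by simp)
  obtain ⟨t, ht⟩ := hv c (by simp)
  apply h
  have hb1 : b.1 = r * v.1 + a.1 := by rw [hr]; rfl
  have hb2 : b.2 = r * v.2 + a.2 := by rw [hr]; rfl
  have hc1 : c.1 = t * v.1 + a.1 := by rw [ht]; rfl
  have hc2 : c.2 = t * v.2 + a.2 := by rw [ht]; rfl
  rw [hb1, hb2, hc1, hc2]; ring

set_option maxHeartbeats 1000000 in
private lemma GC4pts_gp : ∀ i j k : Fin 4, i ≠ j → j ≠ k → i ≠ k →
    ¬ Collinear ℝ ({GC4pts i, GC4pts j, GC4pts k} : Set (ℝ × ℝ)) := by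
  intro i j k hij hjk hik
  fin_cases i <;> fin_cases j <;> fin_cases k <;>
    first
    | exact absurd rfl hij
    | exact absurd rfl hjk
    | exact absurd rfl hik
    | (apply GC4not_collinear; norm_num [GC4pts])

open Classical in
private noncomputable def GC4F {V : Type*} [o : LinearOrder (Sym2 V)] (A : GeomGraph V)
    (C : V → Fin 2) (v : V) : Fin 4 :=
  if h : ∃ p : Sym2 V × Sym2 V, A.cross p.1 p.2 ∧ v ∈ p.1 then
    (if o.lt h.choose.1 h.choose.2 then (if C v = 0 then 0 else 2) else (if C v = 0 then 1 else 3))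
  else (if C v = 0 then 0 else 2)

private lemma GC4uniq {V : Type*} {A : GeomGraph V} (hindep : IndepCrossings A)
    {v : V} {e f e' f' : Sym2 V} (hc : A.cross e f) (hc' : A.cross e' f')
    (hv : v ∈ e) (hv' : v ∈ e') : e = e' ∧ f = f' := by
  by_cases hne : (e = e' ∧ f = f') ∨ (e = f' ∧ f = e')
  · rcases hne with h | ⟨h1, h2⟩
    · exact h
    · exact absurd (h1 ▸ hv) (A.cross_disjoint e' f' hc' v hv')
  · exact absurd (Or.inl hv') (hindep e f e' f' hc hc' hne v (Or.inl hv))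

private lemma GC4F_color {V : Type*} [LinearOrder (Sym2 V)] (A : GeomGraph V) (C : V → Fin 2)
    (v : V) :
    (C v = 0 ∧ (GC4F A C v = 0 ∨ GC4F A C v = 1)) ∨
    (C v = 1 ∧ (GC4F A C v = 2 ∨ GC4F A C v = 3)) := by
  have h2 : C v = 0 ∨ C v = 1 := by omega
  unfold GC4F
  split_ifs <;> simp_all

open Classical in
private lemma GC4F_cross_val {V : Type*} [o : LinearOrder (Sym2 V)] {A : GeomGraph V}
    (hindep : IndepCrossings A) (C : V → Fin 2) {v : V} {e f : Sym2 V}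
    (hc : A.cross e f) (hv : v ∈ e) :
    GC4F A C v = if o.lt e f then (if C v = 0 then 0 else 2)
      else (if C v = 0 then 1 else 3) := by
  classical
  have hex : ∃ p : Sym2 V × Sym2 V, A.cross p.1 p.2 ∧ v ∈ p.1 := ⟨(e, f), hc, hv⟩
  obtain ⟨h1, h2⟩ := GC4uniq hindep hex.choose_spec.1 hc hex.choose_spec.2 hv
  unfold GC4F
  rw [dif_pos hex, h1, h2]

private lemma GC4exists_hom {V : Type*} (A : GeomGraph V) (hindep : IndepCrossings A)
    (C : A.G.Coloring (Fin 2)) :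
    ∃ f : V → Fin 4, (∀ u v, A.G.Adj u v → f u ≠ f v) ∧
      ∀ e₁ e₂, A.cross e₁ e₂ → GC4cross (Sym2.map f e₁) (Sym2.map f e₂) := by
  letI : LinearOrder (Sym2 V) := IsWellOrder.linearOrder WellOrderingRel
  have htwo : ∀ i : Fin 2, i = 0 ∨ i = 1 := by decide
  refine ⟨GC4F A C, ?_, ?_⟩
  · intro u v huv
    have hC : C u ≠ C v := C.valid huv
    rcases GC4F_color A C u with ⟨hu, hFu⟩ | ⟨hu, hFu⟩ <;>
      rcases GC4F_color A C v with ⟨hv', hFv⟩ | ⟨hv', hFv⟩ <;>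
      first
      | exact absurd (hu.trans hv'.symm) hC
      | (rcases hFu with h | h <;> rcases hFv with h' | h' <;> rw [h, h'] <;> decide)
  · intro e₁ e₂ hc
    induction e₁ using Sym2.ind with | _ a b => ?_
    induction e₂ using Sym2.ind with | _ x y => ?_
    have hab : A.G.Adj a b := A.G.mem_edgeSet.mp (A.cross_mem _ _ hc).1
    have hxy : A.G.Adj x y := A.G.mem_edgeSet.mp (A.cross_mem _ _ hc).2
    have hane : s(a, b) ≠ s(x, y) := fun h =>
      (A.cross_disjoint _ _ hc a (Sym2.mem_mk_left a b)) (h ▸ Sym2.mem_mk_left a b)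
    have hc' := A.cross_symm _ _ hc
    have Fa := GC4F_cross_val hindep C hc (Sym2.mem_mk_left a b)
    have Fb := GC4F_cross_val hindep C hc (Sym2.mem_mk_right a b)
    have Fx := GC4F_cross_val hindep C hc' (Sym2.mem_mk_left x y)
    have Fy := GC4F_cross_val hindep C hc' (Sym2.mem_mk_right x y)
    have hCab : C a ≠ C b := C.valid hab
    have hCxy : C x ≠ C y := C.valid hxy
    rw [Sym2.map_pair_eq, Sym2.map_pair_eq]
    rcases lt_or_gt_of_ne hane with hlt | hlt
    · rw [if_pos hlt] at Fa Fb
      rw [if_neg (asymm hlt)] at Fx Fy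
      rw [Fa, Fb, Fx, Fy]
      rcases htwo (C a) with h1 | h1 <;> rcases htwo (C b) with h2 | h2 <;>
        rcases htwo (C x) with h3 | h3 <;> rcases htwo (C y) with h4 | h4 <;>
        first
        | exact absurd (h1.trans h2.symm) hCab
        | exact absurd (h3.trans h4.symm) hCxy
        | (simp only [h1, h2, h3, h4]; decide)
    · rw [if_neg (asymm hlt)] at Fa Fb
      rw [if_pos hlt] at Fx Fy
      rw [Fa, Fb, Fx, Fy]
      rcases htwo (C a) with h1 | h1 <;> rcases htwo (C b) with h2 | h2 <;>
        rcases htwo (C x) with h3 | h3 <;> rcases htwo (C y) with h4 | h4 <;>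
        first
        | exact absurd (h1.trans h2.symm) hCab
        | exact absurd (h3.trans h4.symm) hCxy
        | (simp only [h1, h2, h3, h4]; decide)

private def GC4K : GeomGraph (Fin 4) where
  G := ⊤
  cross := GC4cross
  cross_symm := by unfold GC4cross; tauto
  cross_mem := by
    rintro e f (⟨rfl, rfl⟩ | ⟨rfl, rfl⟩) <;>
      exact ⟨(⊤ : SimpleGraph (Fin 4)).mem_edgeSet.mpr (by decide),
        (⊤ : SimpleGraph (Fin 4)).mem_edgeSet.mpr (by decide)⟩
  cross_disjoint := by
    rintro e f (⟨rfl, rfl⟩ | ⟨rfl, rfl⟩) v hv <;>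
      rw [Sym2.mem_iff] at hv <;> rw [Sym2.mem_iff] <;>
      rcases hv with rfl | rfl <;> decide

/-- If `G` has independent crossings and is bipartite (with at least one edge),
then `X(G) ≤ 4`. -/
theorem geoChrom_le_four_of_bipartite {V : Type*} (A : GeomGraph V)
    (hindep : IndepCrossings A)
    (hχ : A.G.chromaticNumber ≤ 2) (hedge : A.G.edgeSet.Nonempty) :
    geoChrom A ≤ 4 := by
  have hcol : A.G.Colorable 2 := by
    rw [show ((2 : ℕ∞)) = ((2 : ℕ) : ℕ∞) from rfl,
      SimpleGraph.chromaticNumber_le_iff_colorable] at hχ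
    exact hχ
  obtain ⟨C⟩ := hcol
  obtain ⟨f, hf1, hf2⟩ := GC4exists_hom A hindep C
  have h4 : 4 ∈ geoSet A := by
    refine ⟨GC4K, ⟨rfl, GC4pts, GC4pts_inj, GC4pts_gp, GC4key⟩, f, ?_, hf2⟩
    intro u v huv
    show (⊤ : SimpleGraph (Fin 4)).Adj (f u) (f v)
    simp only [SimpleGraph.top_adj]
    exact hf1 u v huv
  exact Nat.sInf_le h4
end

section
/- Let G be a geometric graph with independent crossings and χ(G) = 3. Then X(G) ≤ 6. -/
open Set

-- Geometry: points on the parabola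

-- Three distinct points on the parabola are never collinear.
lemma parabola_noncol_s15 (a b c : ℝ) (hab : a ≠ b) (hbc : b ≠ c) (hac : a ≠ c) :
    ¬ Collinear ℝ ({(a, a^2), (b, b^2), (c, c^2)} : Set (ℝ × ℝ)) := by
  intro h
  rw [collinear_iff_of_mem (Set.mem_insert _ _)] at h
  obtain ⟨v, hv⟩ := h
  obtain ⟨rb, hrb⟩ := hv (b, b^2) (by simp)
  obtain ⟨rc, hrc⟩ := hv (c, c^2) (by simp)
  have h1 : b = rb * v.1 + a := congrArg Prod.fst hrb
  have h2 : b^2 = rb * v.2 + a^2 := congrArg Prod.snd hrb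
  have h3 : c = rc * v.1 + a := congrArg Prod.fst hrc
  have h4 : c^2 = rc * v.2 + a^2 := congrArg Prod.snd hrc
  have key : (b - a) * (c^2 - a^2) = (c - a) * (b^2 - a^2) := by
    rw [h2, h4]
    have hb' : b - a = rb * v.1 := by rw [h1]; ring
    have hc' : c - a = rc * v.1 := by rw [h3]; ring
    rw [hb', hc']; ring
  have hz : (b - a) * (c - a) * (c - b) = 0 := by linear_combination key
  have := mul_ne_zero (mul_ne_zero (sub_ne_zero.2 hab.symm) (sub_ne_zero.2 hac.symm))
    (sub_ne_zero.2 hbc.symm)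
  exact this hz

-- Two chords of the parabola with interleaved endpoints intersect.
lemma parabola_cross_s15 (a c b d : ℝ) (h1 : a < c) (h2 : c < b) (h3 : b < d) :
    (openSegment ℝ (a, a^2) (b, b^2) ∩ openSegment ℝ (c, c^2) (d, d^2)).Nonempty := by
  have hD : (0:ℝ) < c + d - a - b := by linarith
  set x := (c*d - a*b) / (c + d - a - b) with hxdef
  have hxc : c < x := by
    rw [hxdef, lt_div_iff₀ hD]; nlinarith
  have hxb : x < b := by
    rw [hxdef, div_lt_iff₀ hD]; nlinarith
  have hxa : a < x := h1.trans hxc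
  have hxd : x < d := by
    rw [hxdef, div_lt_iff₀ hD]; nlinarith
  have hba : (0:ℝ) < b - a := by linarith
  have hdc : (0:ℝ) < d - c := by linarith
  have hy : (a+b)*x - a*b = (c+d)*x - c*d := by
    rw [hxdef]; field_simp; ring
  refine ⟨(x, (a+b)*x - a*b), ?_, ?_⟩
  · rw [openSegment_eq_image]
    refine ⟨(x - a)/(b - a), ⟨div_pos (by linarith) hba, by rw [div_lt_one hba]; linarith⟩, ?_⟩
    have hne : b - a ≠ 0 := hba.ne'
    rw [Prod.ext_iff]
    constructor
    · show (1 - (x - a)/(b - a)) * a + (x - a)/(b - a) * b = x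
      field_simp; ring
    · show (1 - (x - a)/(b - a)) * a^2 + (x - a)/(b - a) * b^2 = (a+b)*x - a*b
      field_simp; ring
  · rw [hy, openSegment_eq_image]
    refine ⟨(x - c)/(d - c), ⟨div_pos (by linarith) hdc, by rw [div_lt_one hdc]; linarith⟩, ?_⟩
    have hne : d - c ≠ 0 := hdc.ne'
    rw [Prod.ext_iff]
    constructor
    · show (1 - (x - c)/(d - c)) * c + (x - c)/(d - c) * d = x
      field_simp; ring
    · show (1 - (x - c)/(d - c)) * c^2 + (x - c)/(d - c) * d^2 = (c+d)*x - c*d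
      field_simp; ring

-- The table

def rhoN : ℕ → ℕ → ℕ → ℕ → Bool → ℕ
  | 0, 1, 0, 1, true => 1
  | 0, 2, 0, 1, false => 1
  | 0, 2, 0, 1, true => 1
  | 0, 2, 0, 2, true => 1
  | 1, 0, 0, 1, true => 3
  | 1, 0, 1, 2, false => 3
  | 1, 0, 1, 2, true => 3
  | 1, 2, 1, 2, true => 3
  | 2, 0, 0, 2, true => 5
  | 2, 1, 0, 2, false => 5
  | 2, 1, 0, 2, true => 5
  | 2, 1, 1, 2, true => 5
  | g, _, _, _, _ => 2 * g

def rho (g d q1 q2 : Fin 3) (s : Bool) : Fin 6 :=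
  ⟨rhoN g.val d.val (min q1 q2).val (max q1 q2).val s % 6, Nat.mod_lt _ (by norm_num)⟩

lemma rho_symm : ∀ g d q1 q2 s, rho g d q1 q2 s = rho g d q2 q1 s := by decide

lemma rho_class : ∀ g d q1 q2 s, (rho g d q1 q2 s).val / 2 = g.val := by decide

def Interleave (i j k l : Fin 6) : Prop :=
  (min i j < min k l ∧ min k l < max i j ∧ max i j < max k l) ∨
  (min k l < min i j ∧ min i j < max k l ∧ max k l < max i j)

instance (i j k l : Fin 6) : Decidable (Interleave i j k l) := by
  unfold Interleave; infer_instance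

lemma rho_cross : ∀ g1 g2 g3 g4 : Fin 3, g1 ≠ g2 → g3 ≠ g4 → ∀ s : Bool,
    Interleave (rho g1 g2 g3 g4 s) (rho g2 g1 g3 g4 s)
      (rho g3 g4 g1 g2 !s) (rho g4 g3 g1 g2 !s) := by decide

-- ### The convex realization of K₆

noncomputable def pts : Fin 6 → ℝ × ℝ := fun i => ((i.val : ℝ), (i.val : ℝ)^2)

noncomputable def segE : Sym2 (Fin 6) → Set (ℝ × ℝ) :=
  Sym2.lift ⟨fun u v => openSegment ℝ (pts u) (pts v), fun u v => openSegment_symm ℝ (pts u) (pts v)⟩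

@[simp] lemma segE_mk (a b : Fin 6) : segE s(a, b) = openSegment ℝ (pts a) (pts b) := rfl

noncomputable def hexK : GeomGraph (Fin 6) where
  G := ⊤
  cross e₁ e₂ := ¬ e₁.IsDiag ∧ ¬ e₂.IsDiag ∧ (∀ v, v ∈ e₁ → v ∉ e₂) ∧
    (segE e₁ ∩ segE e₂).Nonempty
  cross_symm := by
    rintro e₁ e₂ ⟨h1, h2, h3, h4⟩
    refine ⟨h2, h1, ?_, by rwa [Set.inter_comm] at h4⟩
    intro v hv hv'
    exact h3 v hv' hv
  cross_mem := by
    rintro e₁ e₂ ⟨h1, h2, -, -⟩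
    constructor <;> [skip; skip] <;>
      · rw [SimpleGraph.edgeSet_top, Set.mem_compl_iff, Sym2.mem_diagSet]; assumption
  cross_disjoint := by
    rintro e₁ e₂ ⟨-, -, h3, -⟩ v hv
    exact h3 v hv

lemma pts_injective : Function.Injective pts := by
  intro i j h
  have : ((i.val : ℝ)) = (j.val : ℝ) := congrArg Prod.fst h
  exact Fin.ext (Nat.cast_injective this)

lemma hexK_isReal : IsRealizationOfK 6 hexK := by
  refine ⟨rfl, pts, pts_injective, ?_, ?_⟩
  · intro i j k hij hjk hik
    have h1 : (i.val : ℝ) ≠ (j.val : ℝ) := fun h => hij (Fin.ext (Nat.cast_injective h))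
    have h2 : (j.val : ℝ) ≠ (k.val : ℝ) := fun h => hjk (Fin.ext (Nat.cast_injective h))
    have h3 : (i.val : ℝ) ≠ (k.val : ℝ) := fun h => hik (Fin.ext (Nat.cast_injective h))
    exact parabola_noncol_s15 _ _ _ h1 h2 h3
  · intro a b c d hab hcd
    constructor
    · rintro ⟨-, -, h3, h4⟩
      have ha := h3 a (by simp)
      have hb := h3 b (by simp)
      rw [Sym2.mem_iff, not_or] at ha hb
      exact ⟨ha.1, ha.2, hb.1, hb.2, by simpa using h4⟩
    · rintro ⟨hac, had, hbc, hbd, hne⟩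
      refine ⟨by simpa using hab, by simpa using hcd, ?_, by simpa using hne⟩
      intro v hv hv'
      rw [Sym2.mem_iff] at hv hv'
      rcases hv with rfl | rfl <;> rcases hv' with rfl | rfl <;> simp_all

lemma sym2_mk_min_max {i j : Fin 6} : s(i, j) = s(min i j, max i j) := by
  rcases le_total i j with h | h
  · rw [min_eq_left h, max_eq_right h]
  · rw [min_eq_right h, max_eq_left h, Sym2.eq_swap]

lemma hexK_cross_of_interleave (i j k l : Fin 6) (h : Interleave i j k l) :
    hexK.cross s(i,j) s(k,l) := by
  have base : ∀ a c b d : Fin 6, a < c → c < b → b < d →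
      (segE s(a, b) ∩ segE s(c, d)).Nonempty := by
    intro a c b d h1 h2 h3
    rw [segE_mk, segE_mk]
    exact parabola_cross_s15 _ _ _ _ (by exact_mod_cast h1) (by exact_mod_cast h2)
      (by exact_mod_cast h3)
  have hij : s(i, j) = s(min i j, max i j) := sym2_mk_min_max
  have hkl : s(k, l) = s(min k l, max k l) := sym2_mk_min_max
  rcases h with ⟨h1, h2, h3⟩ | ⟨h1, h2, h3⟩
  · refine ⟨?_, ?_, ?_, ?_⟩
    · rw [hij, Sym2.mk_isDiag_iff]; exact (h1.trans h2).ne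
    · rw [hkl, Sym2.mk_isDiag_iff]; exact (h2.trans h3).ne
    · intro v hv hv'
      rw [hij, Sym2.mem_iff] at hv
      rw [hkl, Sym2.mem_iff] at hv'
      rcases hv with rfl | rfl <;> rcases hv' with h' | h' <;>
        exact absurd h' (by
          first
            | exact h1.ne | exact h1.ne' | exact h2.ne | exact h2.ne'
            | exact h3.ne | exact h3.ne'
            | exact (h1.trans (h2.trans h3)).ne | exact (h1.trans (h2.trans h3)).ne'
            | exact (h1.trans h2).ne | exact (h1.trans h2).ne'
            | exact (h2.trans h3).ne | exact (h2.trans h3).ne')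
    · rw [hij, hkl]; exact base _ _ _ _ h1 h2 h3
  · refine ⟨?_, ?_, ?_, ?_⟩
    · rw [hij, Sym2.mk_isDiag_iff]; exact (h2.trans h3).ne
    · rw [hkl, Sym2.mk_isDiag_iff]; exact (h1.trans h2).ne
    · intro v hv hv'
      rw [hij, Sym2.mem_iff] at hv
      rw [hkl, Sym2.mem_iff] at hv'
      rcases hv with rfl | rfl <;> rcases hv' with h' | h' <;>
        exact absurd h' (by
          first
            | exact h1.ne | exact h1.ne' | exact h2.ne | exact h2.ne'
            | exact h3.ne | exact h3.ne'
            | exact (h1.trans (h2.trans h3)).ne | exact (h1.trans (h2.trans h3)).ne'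
            | exact (h1.trans h2).ne | exact (h1.trans h2).ne'
            | exact (h2.trans h3).ne | exact (h2.trans h3).ne')
    · rw [hij, hkl, Set.inter_comm]; exact base _ _ _ _ h1 h2 h3

-- ### Choosing a side for each edge

open Classical in
noncomputable def eside {V : Type*} (e e' : Sym2 V) : Bool :=
  if WellOrderingRel e e' then false else true

lemma eside_flip {V : Type*} (e e' : Sym2 V) (h : e ≠ e') : eside e' e = ! eside e e' := by
  classical
  unfold eside
  rcases trichotomous_of WellOrderingRel e e' with h1 | h1 | h1
  · rw [if_pos h1, if_neg ?_]
    · rfl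
    · intro h2
      exact irrefl_of WellOrderingRel e (trans_of WellOrderingRel h1 h2)
  · exact absurd h1 h
  · rw [if_pos h1, if_neg ?_]
    · rfl
    · intro h2
      exact irrefl_of WellOrderingRel e (trans_of WellOrderingRel h2 h1)

-- ### The geochromatic coloring

open Classical in
noncomputable def fmap {V : Type*} (A : GeomGraph V) (C : V → Fin 3) (v : V) : Fin 6 :=
  if h : ∃ w x y, A.cross s(v, w) s(x, y) then
    rho (C v) (C h.choose) (C h.choose_spec.choose) (C h.choose_spec.choose_spec.choose)
      (eside s(v, h.choose) s(h.choose_spec.choose, h.choose_spec.choose_spec.choose))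
  else ⟨2 * (C v).val, by omega⟩

lemma fmap_class {V : Type*} (A : GeomGraph V) (C : V → Fin 3) (v : V) :
    (fmap A C v).val / 2 = (C v).val := by
  unfold fmap
  split
  · exact rho_class _ _ _ _ _
  · simp [Nat.mul_div_cancel_left]

lemma fmap_spec {V : Type*} (A : GeomGraph V) (hindep : IndepCrossings A) (C : V → Fin 3)
    {a b x y : V} (cr : A.cross s(a, b) s(x, y)) (hab : a ≠ b) :
    fmap A C a = rho (C a) (C b) (C x) (C y) (eside s(a, b) s(x, y)) := by
  have hex : ∃ w x' y', A.cross s(a, w) s(x', y') := ⟨b, x, y, cr⟩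
  rw [fmap, dif_pos hex]
  have hgen : ∀ w x' y', A.cross s(a, w) s(x', y') →
      rho (C a) (C w) (C x') (C y') (eside s(a, w) s(x', y')) =
        rho (C a) (C b) (C x) (C y) (eside s(a, b) s(x, y)) := by
    intro w x' y' cr'
    have hpair : (s(a, w) = s(a, b) ∧ s(x', y') = s(x, y)) ∨
        (s(a, w) = s(x, y) ∧ s(x', y') = s(a, b)) := by
      by_contra hcon
      exact hindep _ _ _ _ cr' cr hcon a (Or.inl (Sym2.mem_mk_left a w))
        (Or.inl (Sym2.mem_mk_left a b))
    rcases hpair with ⟨h1, h2⟩ | ⟨h1, h2⟩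
    · have hwb : w = b := by
        rcases Sym2.eq_iff.mp h1 with ⟨-, h⟩ | ⟨h, -⟩
        · exact h
        · exact absurd h hab
      rcases Sym2.eq_iff.mp h2 with ⟨hx1, hy1⟩ | ⟨hx1, hy1⟩
      · rw [hwb, hx1, hy1]
      · rw [hwb, hx1, hy1, rho_symm]
        congr 1
        rw [show s(y, x) = s(x, y) from Sym2.eq_swap]
    · exact absurd (h1 ▸ Sym2.mem_mk_left a w)
        (A.cross_disjoint _ _ cr a (Sym2.mem_mk_left a b))
  exact hgen _ _ _ hex.choose_spec.choose_spec.choose_spec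


/-- If `G` has independent crossings and `χ(G) = 3`, then `X(G) ≤ 6`. -/
theorem geoChrom_le_six_of_chromaticNumber_eq_three {V : Type*} (A : GeomGraph V)
    (hindep : IndepCrossings A) (hχ : A.G.chromaticNumber = 3) :
    geoChrom A ≤ 6 := by
  classical
  have hcol : A.G.Colorable 3 :=
    SimpleGraph.chromaticNumber_le_iff_colorable.mp (le_of_eq hχ)
  obtain ⟨C⟩ := hcol
  set f := fmap A (fun v => C v) with hf
  have h6 : (6 : ℕ) ∈ geoSet A := by
    refine ⟨hexK, hexK_isReal, f, ?_, ?_⟩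
    · intro u v huv
      have hne : f u ≠ f v := by
        intro h
        have h2 : (C u).val = (C v).val := by
          rw [← fmap_class A (fun v => C v) u, ← fmap_class A (fun v => C v) v, ← hf, h]
        exact C.valid huv (Fin.ext h2)
      show hexK.G.Adj (f u) (f v)
      simpa [hexK] using hne
    · intro e₁ e₂
      refine Sym2.inductionOn₂ e₁ e₂ ?_
      intro a b x y hcr
      have hadj1 : A.G.Adj a b := (SimpleGraph.mem_edgeSet _).mp (A.cross_mem _ _ hcr).1
      have hadj2 : A.G.Adj x y := (SimpleGraph.mem_edgeSet _).mp (A.cross_mem _ _ hcr).2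
      have hab : a ≠ b := hadj1.ne
      have hxy : x ≠ y := hadj2.ne
      have hee : s(a, b) ≠ s(x, y) := by
        intro h
        exact A.cross_disjoint _ _ hcr a (Sym2.mem_mk_left a b) (h ▸ Sym2.mem_mk_left a b)
      have hca : C a ≠ C b := C.valid hadj1
      have hcx : C x ≠ C y := C.valid hadj2
      set s1 := eside s(a, b) s(x, y) with hs1
      have hfa : f a = rho (C a) (C b) (C x) (C y) s1 := fmap_spec A hindep _ hcr hab
      have hfb : f b = rho (C b) (C a) (C x) (C y) s1 := by
        have cr2 : A.cross s(b, a) s(x, y) := by rwa [Sym2.eq_swap]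
        have h := fmap_spec A hindep (fun v => C v) cr2 hab.symm
        rwa [show s(b, a) = s(a, b) from Sym2.eq_swap] at h
      have hfx : f x = rho (C x) (C y) (C a) (C b) (!s1) := by
        have cr3 := A.cross_symm _ _ hcr
        have h := fmap_spec A hindep (fun v => C v) cr3 hxy
        rwa [eside_flip _ _ hee] at h
      have hfy : f y = rho (C y) (C x) (C a) (C b) (!s1) := by
        have cr4 : A.cross s(y, x) s(a, b) := by
          rw [Sym2.eq_swap]; exact A.cross_symm _ _ hcr
        have h := fmap_spec A hindep (fun v => C v) cr4 hxy.symm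
        rwa [show s(y, x) = s(x, y) from Sym2.eq_swap, eside_flip _ _ hee] at h
      rw [Sym2.map_pair_eq, Sym2.map_pair_eq]
      apply hexK_cross_of_interleave
      rw [hfa, hfb, hfx, hfy]
      exact rho_cross _ _ _ _ hca hcx s1
  exact Nat.sInf_le h6
end

section
/- For every positive integer n there exists a geometric graph G with X(G) − X′(G) = n, where X is the geochromatic number and X′ is the pseudo-geochromatic number. -/
/-- Signed area / orientation determinant of three points in the plane. -/
def sg (P Q R : ℝ × ℝ) : ℝ := (Q.1 - P.1) * (R.2 - P.2) - (Q.2 - P.2) * (R.1 - P.1)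

lemma sg_affine (P Q R S : ℝ × ℝ) (a b : ℝ) (hab : a + b = 1) :
    sg P Q (a • R + b • S) = a * sg P Q R + b * sg P Q S := by
  simp only [sg, Prod.fst_add, Prod.snd_add, Prod.smul_fst, Prod.smul_snd, smul_eq_mul]
  have : b = 1 - a := by linarith
  subst this; ring

lemma sg_of_mem_openSegment {P Q X : ℝ × ℝ} (h : X ∈ openSegment ℝ P Q) :
    sg P Q X = 0 := by
  obtain ⟨a, b, _, _, hab, rfl⟩ := h
  rw [sg_affine P Q P Q a b hab]
  simp only [sg]; ring

lemma straddle_of_cross {P Q R S : ℝ × ℝ}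
    (h : (openSegment ℝ P Q ∩ openSegment ℝ R S).Nonempty)
    (hR : sg P Q R ≠ 0) (hS : sg P Q S ≠ 0) :
    sg P Q R * sg P Q S < 0 := by
  obtain ⟨X, hX1, hX2⟩ := h
  obtain ⟨a, b, ha, hb, hab, hX⟩ := hX2
  have h0 : a * sg P Q R + b * sg P Q S = 0 := by
    rw [← sg_affine P Q R S a b hab, hX, sg_of_mem_openSegment hX1]
  rcases lt_or_gt_of_ne hR with h1 | h1 <;> rcases lt_or_gt_of_ne hS with h2 | h2 <;>
    nlinarith

-- auxiliary: a point X with sg R S X = 0 lies on the line through R S (R ≠ S)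
lemma exists_param {R S X : ℝ × ℝ} (hRS : R ≠ S) (h : sg R S X = 0) :
    ∃ s : ℝ, X = (1 - s) • R + s • S := by
  have hsg : (S.1 - R.1) * (X.2 - R.2) = (S.2 - R.2) * (X.1 - R.1) := by
    simp only [sg] at h; linarith
  by_cases h1 : S.1 - R.1 ≠ 0
  · refine ⟨(X.1 - R.1) / (S.1 - R.1), ?_⟩
    have e1 : (1 - (X.1 - R.1) / (S.1 - R.1)) * R.1 + (X.1 - R.1) / (S.1 - R.1) * S.1 = X.1 := by
      field_simp; ring
    have e2 : (1 - (X.1 - R.1) / (S.1 - R.1)) * R.2 + (X.1 - R.1) / (S.1 - R.1) * S.2 = X.2 := by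
      field_simp; nlinarith [hsg]
    ext <;> simp [Prod.fst_add, Prod.snd_add, Prod.smul_fst, Prod.smul_snd, smul_eq_mul]
    · exact e1.symm
    · exact e2.symm
  · push_neg at h1
    have h2 : S.2 - R.2 ≠ 0 := by
      intro hh
      exact hRS (by ext <;> linarith)
    refine ⟨(X.2 - R.2) / (S.2 - R.2), ?_⟩
    have hX1 : X.1 = R.1 := by
      rw [h1] at hsg; simp at hsg
      rcases hsg with h | h
      · exact absurd h h2
      · linarith
    have e1 : (1 - (X.2 - R.2) / (S.2 - R.2)) * R.1 + (X.2 - R.2) / (S.2 - R.2) * S.1 = X.1 := by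
      have : S.1 = R.1 := by linarith
      rw [this, hX1]; ring
    have e2 : (1 - (X.2 - R.2) / (S.2 - R.2)) * R.2 + (X.2 - R.2) / (S.2 - R.2) * S.2 = X.2 := by
      field_simp; ring
    ext <;> simp [Prod.fst_add, Prod.snd_add, Prod.smul_fst, Prod.smul_snd, smul_eq_mul]
    · exact e1.symm
    · exact e2.symm

lemma segs_cross {P Q R S : ℝ × ℝ}
    (h1 : sg P Q R * sg P Q S < 0) (h2 : sg R S P * sg R S Q < 0) :
    (openSegment ℝ P Q ∩ openSegment ℝ R S).Nonempty := by
  have hRS : R ≠ S := by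
    rintro rfl
    simp only [sg] at h2
    nlinarith
  set α := sg R S P with hα
  set β := sg R S Q with hβ
  have hαβ : α * β < 0 := h2
  have hne : α - β ≠ 0 := by
    rcases mul_neg_iff.1 hαβ with ⟨h3, h4⟩ | ⟨h3, h4⟩ <;> intro h5 <;> nlinarith
  set t := α / (α - β) with ht
  have ht0 : 0 < t := by
    rcases mul_neg_iff.1 hαβ with ⟨h3, h4⟩ | ⟨h3, h4⟩
    · exact div_pos h3 (by linarith)
    · have : α - β < 0 := by linarith
      exact div_pos_of_neg_of_neg h3 this
  have ht1 : t < 1 := by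
    rcases mul_neg_iff.1 hαβ with ⟨h3, h4⟩ | ⟨h3, h4⟩
    · rw [ht, div_lt_one (by linarith)]; linarith
    · rw [ht, div_lt_one_of_neg (by linarith)]; linarith
  set X := (1 - t) • P + t • Q with hX
  have hXPQ : X ∈ openSegment ℝ P Q := ⟨1 - t, t, by linarith, ht0, by ring, rfl⟩
  have hsgX : sg R S X = 0 := by
    rw [hX, sg_affine R S P Q (1 - t) t (by ring), ← hα, ← hβ, ht]
    field_simp
    ring
  obtain ⟨s, hs⟩ := exists_param hRS hsgX
  have hsgPQX : sg P Q X = 0 := by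
    rw [hX, sg_affine P Q P Q (1 - t) t (by ring)]
    simp only [sg]; ring
  have key : (1 - s) * sg P Q R + s * sg P Q S = 0 := by
    rw [← sg_affine P Q R S (1 - s) s (by ring), ← hs, hsgPQX]
  have hs0 : 0 < s ∧ s < 1 := by
    constructor
    · by_contra hcon
      push_neg at hcon
      rcases mul_neg_iff.1 h1 with ⟨h3, h4⟩ | ⟨h3, h4⟩ <;> nlinarith
    · by_contra hcon
      push_neg at hcon
      rcases mul_neg_iff.1 h1 with ⟨h3, h4⟩ | ⟨h3, h4⟩ <;> nlinarith
  exact ⟨X, hXPQ, ⟨1 - s, s, by linarith [hs0.2], hs0.1, by ring, hs.symm⟩⟩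

lemma collinear_of_sg_eq_zero {P Q R : ℝ × ℝ} (h : sg P Q R = 0) :
    Collinear ℝ ({P, Q, R} : Set (ℝ × ℝ)) := by
  by_cases hPQ : P = Q
  · subst hPQ
    have : ({P, P, R} : Set (ℝ × ℝ)) = {P, R} := by simp
    rw [this]
    exact collinear_pair ℝ P R
  · obtain ⟨s, hs⟩ := exists_param hPQ h
    have hsub : ({P, Q, R} : Set (ℝ × ℝ)) ⊆ {X | ∃ u : ℝ, X = (1 - u) • P + u • Q} := by
      rintro X (rfl | rfl | rfl)
      · exact ⟨0, by simp⟩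
      · exact ⟨1, by simp⟩
      · exact ⟨s, hs⟩
    have hline : Collinear ℝ {X : ℝ × ℝ | ∃ u : ℝ, X = (1 - u) • P + u • Q} := by
      rw [collinear_iff_exists_forall_eq_smul_vadd]
      refine ⟨P, Q - P, ?_⟩
      rintro X ⟨u, rfl⟩
      refine ⟨u, ?_⟩
      simp only [vadd_eq_add, smul_sub]
      ext <;> simp [Prod.smul_fst, Prod.smul_snd, smul_eq_mul] <;> ring
    exact hline.subset hsub


lemma not_collinear_of_sg_ne_zero {P Q R : ℝ × ℝ} (h : sg P Q R ≠ 0) :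
    ¬ Collinear ℝ ({P, Q, R} : Set (ℝ × ℝ)) := by
  intro hc
  apply h
  rw [collinear_iff_exists_forall_eq_smul_vadd] at hc
  obtain ⟨p₀, v, hv⟩ := hc
  obtain ⟨rP, hP⟩ := hv P (by simp)
  obtain ⟨rQ, hQ⟩ := hv Q (by simp)
  obtain ⟨rR, hR⟩ := hv R (by simp)
  rw [hP, hQ, hR]
  simp only [sg, vadd_eq_add, Prod.fst_add, Prod.snd_add, Prod.smul_fst, Prod.smul_snd,
    smul_eq_mul]
  ring


lemma sg_ne_zero_of_not_collinear {P Q R : ℝ × ℝ}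
    (h : ¬ Collinear ℝ ({P, Q, R} : Set (ℝ × ℝ))) : sg P Q R ≠ 0 :=
  fun hs => h (collinear_of_sg_eq_zero hs)

/-- All points on the standard parabola. -/
def pt (t : ℝ) : ℝ × ℝ := (t, t ^ 2)

lemma pt_injective : Function.Injective pt := fun a b h => congrArg Prod.fst h

lemma sg_pt (s t u : ℝ) : sg (pt s) (pt t) (pt u) = (t - s) * (u - s) * (u - t) := by
  simp only [sg, pt]; ring

lemma pt_cross {q1 q2 q3 q4 : ℝ} (h12 : q1 < q2) (h23 : q2 < q3) (h34 : q3 < q4) :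
    (openSegment ℝ (pt q1) (pt q3) ∩ openSegment ℝ (pt q2) (pt q4)).Nonempty := by
  have f21 : 0 < q2 - q1 := by linarith
  have f31 : 0 < q3 - q1 := by linarith
  have f41 : 0 < q4 - q1 := by linarith
  have f32 : 0 < q3 - q2 := by linarith
  have f42 : 0 < q4 - q2 := by linarith
  have f43 : 0 < q4 - q3 := by linarith
  apply segs_cross
  · rw [sg_pt, sg_pt]
    have pos : 0 < (q3 - q1) * ((q2 - q1) * ((q3 - q2) * ((q3 - q1) * ((q4 - q1) * (q4 - q3))))) :=
      mul_pos f31 (mul_pos f21 (mul_pos f32 (mul_pos f31 (mul_pos f41 f43))))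
    nlinarith [pos]
  · rw [sg_pt, sg_pt]
    have pos : 0 < (q4 - q2) * ((q2 - q1) * ((q4 - q1) * ((q4 - q2) * ((q3 - q2) * (q4 - q3))))) :=
      mul_pos f42 (mul_pos f21 (mul_pos f41 (mul_pos f42 (mul_pos f32 f43))))
    nlinarith [pos]

/-- Four-point lemma: among four points in general position, two of the three
matchings cannot both be crossing. -/
lemma no_double_cross {X Y U V : ℝ × ℝ}
    (hXYU : sg X Y U ≠ 0) (hXYV : sg X Y V ≠ 0)
    (hUVX : sg U V X ≠ 0) (hUVY : sg U V Y ≠ 0)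
    (hXUY : sg X U Y ≠ 0) (hXUV : sg X U V ≠ 0)
    (hc1 : (openSegment ℝ X Y ∩ openSegment ℝ U V).Nonempty)
    (hc2 : (openSegment ℝ X U ∩ openSegment ℝ Y V).Nonempty) : False := by
  have s1 : sg X Y U * sg X Y V < 0 := straddle_of_cross hc1 hXYU hXYV
  have s2 : sg U V X * sg U V Y < 0 := by
    apply straddle_of_cross _ hUVX hUVY
    rw [Set.inter_comm] at hc1; exact hc1
  have s3 : sg X U Y * sg X U V < 0 := straddle_of_cross hc2 hXUY hXUV
  -- express everything through a = sg X Y U, b = sg X Y V, c = sg X U V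
  have e1 : sg X U Y = - sg X Y U := by simp only [sg]; ring
  have e2 : sg U V X = sg X U V := by simp only [sg]; ring
  have e3 : sg U V Y = sg X Y U - sg X Y V + sg X U V := by simp only [sg]; ring
  rw [e1] at s3
  rw [e2, e3] at s2
  set a := sg X Y U
  set b := sg X Y V
  set c := sg X U V
  -- s1 : a * b < 0, s3 : -a * c < 0, s2 : c * (a - b + c) < 0
  nlinarith [s1, s2, s3, sq_nonneg c, sq_nonneg (a*c), mul_self_nonneg (a - b + c)]

-- BEGIN Kpar
/-- The crossing relation induced by points on the parabola. -/
def Kcross (N : ℕ) (t : Fin N → ℝ) : Sym2 (Fin N) → Sym2 (Fin N) → Prop :=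
  fun e f => ∃ a b c d : Fin N, e = s(a, b) ∧ f = s(c, d) ∧ a ≠ b ∧ c ≠ d ∧
    a ≠ c ∧ a ≠ d ∧ b ≠ c ∧ b ≠ d ∧
    (openSegment ℝ (pt (t a)) (pt (t b)) ∩ openSegment ℝ (pt (t c)) (pt (t d))).Nonempty

def Kpar (N : ℕ) (t : Fin N → ℝ) : GeomGraph (Fin N) where
  G := ⊤
  cross := Kcross N t
  cross_symm := by
    rintro e f ⟨a, b, c, d, he, hf, hab, hcd, hac, had, hbc, hbd, hne⟩
    exact ⟨c, d, a, b, hf, he, hcd, hab, hac.symm, hbc.symm, had.symm, hbd.symm,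
      by rwa [Set.inter_comm] at hne⟩
  cross_mem := by
    rintro e f ⟨a, b, c, d, rfl, rfl, hab, hcd, _⟩
    constructor <;> rw [SimpleGraph.mem_edgeSet] <;> simp [hab, hcd]
  cross_disjoint := by
    rintro e f ⟨a, b, c, d, rfl, rfl, hab, hcd, hac, had, hbc, hbd, hne⟩ v hv hv2
    rw [Sym2.mem_iff] at hv hv2
    rcases hv with rfl | rfl <;> rcases hv2 with rfl | rfl <;> simp_all

lemma Kpar_isRealization (N : ℕ) (t : Fin N → ℝ) (ht : Function.Injective t) :
    IsRealizationOfK N (Kpar N t) := by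
  refine ⟨rfl, pt ∘ t, pt_injective.comp ht, ?_, ?_⟩
  · intro i j k hij hjk hik
    apply not_collinear_of_sg_ne_zero
    simp only [Function.comp_apply]
    rw [sg_pt]
    have h1 : t j - t i ≠ 0 := sub_ne_zero.2 (fun h => hij (ht h).symm)
    have h2 : t k - t i ≠ 0 := sub_ne_zero.2 (fun h => hik (ht h).symm)
    have h3 : t k - t j ≠ 0 := sub_ne_zero.2 (fun h => hjk (ht h).symm)
    exact mul_ne_zero (mul_ne_zero h1 h2) h3
  · intro a b c d hab hcd
    constructor
    · rintro ⟨a', b', c', d', he, hf, h1, h2, h3, h4, h5, h6, hne⟩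
      rw [Sym2.eq_iff] at he hf
      rcases he with ⟨rfl, rfl⟩ | ⟨rfl, rfl⟩ <;> rcases hf with ⟨rfl, rfl⟩ | ⟨rfl, rfl⟩ <;>
        refine ⟨?_, ?_, ?_, ?_, ?_⟩ <;>
        first
          | assumption
          | (exact Ne.symm (by assumption))
          | (simp only [Function.comp_apply]
             first
               | exact hne
               | (rwa [openSegment_symm ℝ (pt (t b)) (pt (t a))] at hne)
               | (rwa [openSegment_symm ℝ (pt (t d)) (pt (t c))] at hne)
               | (rwa [openSegment_symm ℝ (pt (t b)) (pt (t a)),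
                       openSegment_symm ℝ (pt (t d)) (pt (t c))] at hne))
    · rintro ⟨h1, h2, h3, h4, hne⟩
      exact ⟨a, b, c, d, rfl, rfl, hab, hcd, h1, h2, h3, h4, hne⟩

-- vertices of gadget k (k < n): a = 3k, v = 3k+1, c = 3k+2, b = 3n+2k, u = 3n+2k+1
def va (n : ℕ) (k : Fin n) : Fin (5 * n) := ⟨3 * k.val, by have := k.isLt; omega⟩
def vV (n : ℕ) (k : Fin n) : Fin (5 * n) := ⟨3 * k.val + 1, by have := k.isLt; omega⟩
def vc (n : ℕ) (k : Fin n) : Fin (5 * n) := ⟨3 * k.val + 2, by have := k.isLt; omega⟩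
def vb (n : ℕ) (k : Fin n) : Fin (5 * n) := ⟨3 * n + 2 * k.val, by have := k.isLt; omega⟩
def vu (n : ℕ) (k : Fin n) : Fin (5 * n) := ⟨3 * n + 2 * k.val + 1, by have := k.isLt; omega⟩

-- the five edges of gadget k
def E1 (n : ℕ) (k : Fin n) : Sym2 (Fin (5 * n)) := s(va n k, vb n k)
def E2 (n : ℕ) (k : Fin n) : Sym2 (Fin (5 * n)) := s(vb n k, vc n k)
def Eg (n : ℕ) (k : Fin n) : Sym2 (Fin (5 * n)) := s(vu n k, vV n k)
def Ecu (n : ℕ) (k : Fin n) : Sym2 (Fin (5 * n)) := s(vc n k, vu n k)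
def Ebv (n : ℕ) (k : Fin n) : Sym2 (Fin (5 * n)) := s(vb n k, vV n k)

def baseRel (n : ℕ) (x y : Fin (5 * n)) : Prop :=
  ∃ k : Fin n, (x = va n k ∧ y = vb n k) ∨ (x = vb n k ∧ y = vc n k) ∨
    (x = vu n k ∧ y = vV n k) ∨ (x = vc n k ∧ y = vu n k) ∨ (x = vb n k ∧ y = vV n k)

/-- the long bundle-edges of gadget k -/
def bun (n : ℕ) (k : Fin n) (e : Sym2 (Fin (5 * n))) : Prop :=
  e = E1 n k ∨ e = E2 n k ∨ e = Eg n k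

def Across (n : ℕ) : Sym2 (Fin (5 * n)) → Sym2 (Fin (5 * n)) → Prop := fun e f =>
  (∃ k l : Fin n, k ≠ l ∧ bun n k e ∧ bun n l f) ∨
  (∃ k : Fin n, (e = E1 n k ∧ f = Eg n k) ∨ (e = Eg n k ∧ f = E1 n k) ∨
    (e = Ecu n k ∧ f = Ebv n k) ∨ (e = Ebv n k ∧ f = Ecu n k))

def Agraph (n : ℕ) : GeomGraph (Fin (5 * n)) where
  G := SimpleGraph.fromRel (baseRel n)
  cross := Across n
  cross_symm := by
    rintro e f (⟨k, l, hkl, he, hf⟩ | ⟨k, h⟩)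
    · exact Or.inl ⟨l, k, hkl.symm, hf, he⟩
    · exact Or.inr ⟨k, by tauto⟩
  cross_mem := by
    have adj : ∀ (e : Sym2 (Fin (5 * n))) (k : Fin n),
        (e = E1 n k ∨ e = E2 n k ∨ e = Eg n k ∨ e = Ecu n k ∨ e = Ebv n k) →
        e ∈ (SimpleGraph.fromRel (baseRel n)).edgeSet := by
      have hk : ∀ k : Fin n, (k : ℕ) < n := fun k => k.isLt
      rintro e k (rfl | rfl | rfl | rfl | rfl) <;>
        · simp only [E1, E2, Eg, Ecu, Ebv, SimpleGraph.mem_edgeSet, SimpleGraph.fromRel_adj] <;>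
          refine ⟨?_, Or.inl ⟨k, by tauto⟩⟩ <;>
          · have := hk k
            simp only [va, vV, vc, vb, vu, ne_eq, Fin.mk.injEq]
            omega
    rintro e f (⟨k, l, _, he, hf⟩ | ⟨k, h⟩)
    · exact ⟨adj e k (by rcases he with h|h|h <;> tauto), adj f l (by rcases hf with h|h|h <;> tauto)⟩
    · rcases h with ⟨rfl, rfl⟩ | ⟨rfl, rfl⟩ | ⟨rfl, rfl⟩ | ⟨rfl, rfl⟩ <;>
        exact ⟨adj _ k (by tauto), adj _ k (by tauto)⟩
  cross_disjoint := by
    rintro e f (⟨k, l, hkl, he, hf⟩ | ⟨k, h⟩) w hw hw2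
    · have hkl' : (k : ℕ) ≠ (l : ℕ) := fun h => hkl (Fin.ext h)
      have hkn : (k : ℕ) < n := k.isLt
      have hln : (l : ℕ) < n := l.isLt
      rcases he with rfl | rfl | rfl <;> rcases hf with rfl | rfl | rfl <;>
        simp only [E1, E2, Eg, Sym2.mem_iff, va, vb, vc, vu, vV, Fin.ext_iff] at hw hw2 <;>
        omega
    · have hkn : (k : ℕ) < n := k.isLt
      rcases h with ⟨rfl, rfl⟩ | ⟨rfl, rfl⟩ | ⟨rfl, rfl⟩ | ⟨rfl, rfl⟩ <;>
        simp only [E1, E2, Eg, Ecu, Ebv, Sym2.mem_iff, va, vb, vc, vu, vV, Fin.ext_iff]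
          at hw hw2 <;>
        omega

-- the parameter assignment: position on the parabola is just the vertex index
def tpar (N : ℕ) : Fin N → ℝ := fun q => (q.val : ℝ)

lemma tpar_injective (N : ℕ) : Function.Injective (tpar N) := by
  intro x y h
  exact Fin.ext (Nat.cast_injective h)

/-- interleaved indices give a crossing in the parabola realization -/
lemma kcross_of_lt {N : ℕ} {x y z w : Fin N} (h1 : x.val < z.val) (h2 : z.val < y.val)
    (h3 : y.val < w.val) : Kcross N (tpar N) s(x, y) s(z, w) := by
  have q12 : (tpar N) x < (tpar N) z := by simp only [tpar]; exact_mod_cast h1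
  have q23 : (tpar N) z < (tpar N) y := by simp only [tpar]; exact_mod_cast h2
  have q34 : (tpar N) y < (tpar N) w := by simp only [tpar]; exact_mod_cast h3
  refine ⟨x, y, z, w, rfl, rfl, ?_, ?_, ?_, ?_, ?_, ?_, pt_cross q12 q23 q34⟩ <;>
    (intro h; subst h; omega)

lemma kcross_symm {N : ℕ} {t : Fin N → ℝ} {e f : Sym2 (Fin N)} (h : Kcross N t e f) :
    Kcross N t f e := by
  obtain ⟨a, b, c, d, he, hf, hab, hcd, hac, had, hbc, hbd, hne⟩ := h
  exact ⟨c, d, a, b, hf, he, hcd, hab, hac.symm, hbc.symm, had.symm, hbd.symm,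
    by rwa [Set.inter_comm] at hne⟩

lemma kcross_of_lt' {N : ℕ} {x y z w : Fin N} (h1 : z.val < x.val) (h2 : x.val < w.val)
    (h3 : w.val < y.val) : Kcross N (tpar N) s(x, y) s(z, w) :=
  kcross_symm (kcross_of_lt h1 h2 h3)

lemma bun_norm {n : ℕ} {k : Fin n} {e : Sym2 (Fin (5 * n))} (h : bun n k e) :
    ∃ x y : Fin (5 * n), e = s(x, y) ∧ 3 * k.val ≤ x.val ∧ x.val < 3 * k.val + 3 ∧
      3 * n + 2 * k.val ≤ y.val ∧ y.val < 3 * n + 2 * k.val + 2 := by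
  rcases h with rfl | rfl | rfl
  · exact ⟨va n k, vb n k, rfl, by simp [va], by simp [va], by simp [vb], by simp [vb]⟩
  · exact ⟨vc n k, vb n k, Sym2.eq_swap.symm, by simp [vc], by simp [vc], by simp [vb],
      by simp [vb]⟩
  · exact ⟨vV n k, vu n k, Sym2.eq_swap.symm, by simp [vV], by simp [vV], by simp [vu],
      by simp [vu]⟩

lemma across_kcross {n : ℕ} {e f : Sym2 (Fin (5 * n))} (h : Across n e f) :
    Kcross (5 * n) (tpar (5 * n)) e f := by
  rcases h with ⟨k, l, hkl, he, hf⟩ | ⟨k, h⟩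
  · obtain ⟨x, y, rfl, hx1, hx2, hy1, hy2⟩ := bun_norm he
    obtain ⟨z, w, rfl, hz1, hz2, hw1, hw2⟩ := bun_norm hf
    have hkl' : (k : ℕ) ≠ (l : ℕ) := fun hh => hkl (Fin.ext hh)
    have hkn : (k : ℕ) < n := k.isLt
    have hln : (l : ℕ) < n := l.isLt
    rcases Nat.lt_or_ge k.val l.val with hlt | hge
    · exact kcross_of_lt (by omega) (by omega) (by omega)
    · exact kcross_of_lt' (by omega) (by omega) (by omega)
  · have hkn : (k : ℕ) < n := k.isLt
    rcases h with ⟨rfl, rfl⟩ | ⟨rfl, rfl⟩ | ⟨rfl, rfl⟩ | ⟨rfl, rfl⟩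
    · rw [E1, Eg, Sym2.eq_swap (a := vu n k)]
      exact kcross_of_lt (x := va n k) (by simp [va, vV]) (by simp [vV, vb]; omega) (by simp [vb, vu])
    · rw [E1, Eg, Sym2.eq_swap (a := vu n k)]
      exact kcross_of_lt' (by simp [va, vV]) (by simp [vV, vb]; omega) (by simp [vb, vu])
    · rw [Ecu, Ebv, Sym2.eq_swap (a := vb n k)]
      exact kcross_of_lt' (by simp [vV, vc]) (by simp [vc, vb]; omega) (by simp [vb, vu])
    · rw [Ecu, Ebv, Sym2.eq_swap (a := vb n k)]
      exact kcross_of_lt (by simp [vV, vc]) (by simp [vc, vb]; omega) (by simp [vb, vu])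


/-- every vertex of `Fin (5*n)` is one of the five gadget vertices -/
lemma decomp (n : ℕ) (q : Fin (5 * n)) : ∃ k : Fin n,
    q = va n k ∨ q = vV n k ∨ q = vc n k ∨ q = vb n k ∨ q = vu n k := by
  have hq := q.isLt
  by_cases h : q.val < 3 * n
  · refine ⟨⟨q.val / 3, by omega⟩, ?_⟩
    have h3 : q.val % 3 < 3 := Nat.mod_lt _ (by omega)
    have hdm := Nat.div_add_mod q.val 3
    simp only [va, vV, vc, Fin.ext_iff]
    omega
  · refine ⟨⟨(q.val - 3 * n) / 2, by omega⟩, ?_⟩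
    have h2 : (q.val - 3 * n) % 2 < 2 := Nat.mod_lt _ (by omega)
    have hdm := Nat.div_add_mod (q.val - 3 * n) 2
    simp only [vb, vu, Fin.ext_iff]
    omega

/-- Any geometric homomorphism from `Agraph n` to a realization of `K_N` is injective. -/
lemma hom_injective (n N : ℕ) (K : GeomGraph (Fin N)) (hK : IsRealizationOfK N K)
    (f : Fin (5 * n) → Fin N) (hf : IsGeomHom (Agraph n) K f) : Function.Injective f := by
  obtain ⟨hG, p, hpinj, hgen, hiff⟩ := hK
  obtain ⟨hadj, hcross⟩ := hf
  -- adjacent vertices have distinct images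
  have hne_adj : ∀ u v, (Agraph n).G.Adj u v → f u ≠ f v := by
    intro u v h
    have := hadj u v h
    rw [hG] at this
    exact this.ne
  -- vertices joined by a declared crossing have distinct images
  have hne_cross : ∀ e₁ e₂ u v, Across n e₁ e₂ → u ∈ e₁ → v ∈ e₂ → f u ≠ f v := by
    intro e₁ e₂ u v hc hu hv heq
    have hkc := hcross e₁ e₂ hc
    have hmem1 : f u ∈ Sym2.map f e₁ := Sym2.mem_map.2 ⟨u, hu, rfl⟩
    have hmem2 : f v ∈ Sym2.map f e₂ := Sym2.mem_map.2 ⟨v, hv, rfl⟩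
    exact K.cross_disjoint _ _ hkc (f u) hmem1 (heq ▸ hmem2)
  -- basic adjacencies
  have adj_ab : ∀ k, (Agraph n).G.Adj (va n k) (vb n k) := by
    intro k
    refine ⟨?_, Or.inl ⟨k, by tauto⟩⟩
    have := k.isLt
    simp only [va, vb, ne_eq, Fin.ext_iff]; omega
  have adj_bc : ∀ k, (Agraph n).G.Adj (vb n k) (vc n k) := by
    intro k
    refine ⟨?_, Or.inl ⟨k, by tauto⟩⟩
    have := k.isLt
    simp only [vb, vc, ne_eq, Fin.ext_iff]; omega
  have adj_uv : ∀ k, (Agraph n).G.Adj (vu n k) (vV n k) := by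
    intro k
    refine ⟨?_, Or.inl ⟨k, by tauto⟩⟩
    have := k.isLt
    simp only [vu, vV, ne_eq, Fin.ext_iff]; omega
  have adj_cu : ∀ k, (Agraph n).G.Adj (vc n k) (vu n k) := by
    intro k
    refine ⟨?_, Or.inl ⟨k, by tauto⟩⟩
    have := k.isLt
    simp only [vc, vu, ne_eq, Fin.ext_iff]; omega
  have adj_bv : ∀ k, (Agraph n).G.Adj (vb n k) (vV n k) := by
    intro k
    refine ⟨?_, Or.inl ⟨k, by tauto⟩⟩
    have := k.isLt
    simp only [vb, vV, ne_eq, Fin.ext_iff]; omega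
  -- the two intra-gadget declared crossings
  have cross1 : ∀ k, Across n (E1 n k) (Eg n k) := fun k => Or.inr ⟨k, by tauto⟩
  have cross2 : ∀ k, Across n (Ecu n k) (Ebv n k) := fun k => Or.inr ⟨k, by tauto⟩
  -- the key geometric step: a and c cannot be identified
  have hac : ∀ k, f (va n k) ≠ f (vc n k) := by
    intro k heq
    -- images
    set X := f (va n k) with hX
    set Y := f (vb n k) with hY
    set U := f (vu n k) with hU
    set V := f (vV n k) with hV
    have hXY : X ≠ Y := hne_adj _ _ (adj_ab k)
    have hUV : U ≠ V := hne_adj _ _ (adj_uv k)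
    have hCU : f (vc n k) ≠ U := hne_adj _ _ (adj_cu k)
    have kc1 : K.cross s(X, Y) s(U, V) := by
      have := hcross _ _ (cross1 k)
      simp only [E1, Eg, Sym2.map_pair_eq] at this
      exact this
    have kc2 : K.cross s(X, U) s(Y, V) := by
      have := hcross _ _ (cross2 k)
      simp only [Ecu, Ebv, Sym2.map_pair_eq] at this
      rw [← heq] at this
      exact this
    obtain ⟨hXU, hXV, hYU, hYV, hseg1⟩ := (hiff X Y U V hXY hUV).1 kc1
    obtain ⟨-, -, -, -, hseg2⟩ := (hiff X U Y V (heq ▸ hCU) (hne_adj _ _ (adj_bv k))).1 kc2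
    have g1 := hgen X Y U hXY hYU hXU
    have g2 := hgen X Y V hXY hYV hXV
    have g3 := hgen U V X hUV hXV.symm hXU.symm
    have g4 := hgen U V Y hUV hYV.symm hYU.symm
    have g5 := hgen X U Y hXU hYU.symm hXY
    have g6 := hgen X U V hXU hUV hXV
    exact no_double_cross (sg_ne_zero_of_not_collinear g1) (sg_ne_zero_of_not_collinear g2)
      (sg_ne_zero_of_not_collinear g3) (sg_ne_zero_of_not_collinear g4)
      (sg_ne_zero_of_not_collinear g5) (sg_ne_zero_of_not_collinear g6) hseg1 hseg2
  -- memberships of each vertex in a bundle edge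
  have mem_bun : ∀ (k : Fin n) (x : Fin (5 * n)),
      (x = va n k ∨ x = vV n k ∨ x = vc n k ∨ x = vb n k ∨ x = vu n k) →
      ∃ e, bun n k e ∧ x ∈ e := by
    rintro k x (rfl | rfl | rfl | rfl | rfl)
    · exact ⟨E1 n k, Or.inl rfl, by rw [E1]; exact Sym2.mem_mk_left _ _⟩
    · exact ⟨Eg n k, Or.inr (Or.inr rfl), by rw [Eg]; exact Sym2.mem_mk_right _ _⟩
    · exact ⟨E2 n k, Or.inr (Or.inl rfl), by rw [E2]; exact Sym2.mem_mk_right _ _⟩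
    · exact ⟨E1 n k, Or.inl rfl, by rw [E1]; exact Sym2.mem_mk_right _ _⟩
    · exact ⟨Eg n k, Or.inr (Or.inr rfl), by rw [Eg]; exact Sym2.mem_mk_left _ _⟩
  -- now injectivity
  have cross1r : ∀ k, Across n (Eg n k) (E1 n k) := fun k => Or.inr ⟨k, by tauto⟩
  have cross2r : ∀ k, Across n (Ebv n k) (Ecu n k) := fun k => Or.inr ⟨k, by tauto⟩
  have mE1a : ∀ k, va n k ∈ E1 n k := fun k => by rw [E1]; exact Sym2.mem_mk_left _ _
  have mE1b : ∀ k, vb n k ∈ E1 n k := fun k => by rw [E1]; exact Sym2.mem_mk_right _ _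
  have mEgu : ∀ k, vu n k ∈ Eg n k := fun k => by rw [Eg]; exact Sym2.mem_mk_left _ _
  have mEgv : ∀ k, vV n k ∈ Eg n k := fun k => by rw [Eg]; exact Sym2.mem_mk_right _ _
  have mCuc : ∀ k, vc n k ∈ Ecu n k := fun k => by rw [Ecu]; exact Sym2.mem_mk_left _ _
  have mBvv : ∀ k, vV n k ∈ Ebv n k := fun k => by rw [Ebv]; exact Sym2.mem_mk_right _ _
  intro x y heq
  by_contra hxy
  obtain ⟨k, hkx⟩ := decomp n x
  obtain ⟨l, hly⟩ := decomp n y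
  by_cases hkl : k = l
  · subst hkl
    rcases hkx with rfl | rfl | rfl | rfl | rfl <;> rcases hly with rfl | rfl | rfl | rfl | rfl
    · exact hxy rfl
    · exact hne_cross _ _ _ _ (cross1 k) (mE1a k) (mEgv k) heq
    · exact hac k heq
    · exact hne_adj _ _ (adj_ab k) heq
    · exact hne_cross _ _ _ _ (cross1 k) (mE1a k) (mEgu k) heq
    · exact hne_cross _ _ _ _ (cross1r k) (mEgv k) (mE1a k) heq
    · exact hxy rfl
    · exact hne_cross _ _ _ _ (cross2r k) (mBvv k) (mCuc k) heq
    · exact hne_adj _ _ (adj_bv k).symm heq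
    · exact hne_adj _ _ (adj_uv k).symm heq
    · exact (hac k).symm heq
    · exact hne_cross _ _ _ _ (cross2 k) (mCuc k) (mBvv k) heq
    · exact hxy rfl
    · exact hne_adj _ _ (adj_bc k).symm heq
    · exact hne_adj _ _ (adj_cu k) heq
    · exact hne_adj _ _ (adj_ab k).symm heq
    · exact hne_adj _ _ (adj_bv k) heq
    · exact hne_adj _ _ (adj_bc k) heq
    · exact hxy rfl
    · exact hne_cross _ _ _ _ (cross1 k) (mE1b k) (mEgu k) heq
    · exact hne_cross _ _ _ _ (cross1r k) (mEgu k) (mE1a k) heq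
    · exact hne_adj _ _ (adj_uv k) heq
    · exact hne_adj _ _ (adj_cu k).symm heq
    · exact hne_cross _ _ _ _ (cross1r k) (mEgu k) (mE1b k) heq
    · exact hxy rfl
  · obtain ⟨e₁, hb1, hm1⟩ := mem_bun k x hkx
    obtain ⟨e₂, hb2, hm2⟩ := mem_bun l y hly
    exact hne_cross _ _ _ _ (Or.inl ⟨k, l, hkl, hb1, hb2⟩) hm1 hm2 heq


lemma geoChrom_eq (n : ℕ) : geoChrom (Agraph n) = 5 * n := by
  have hmem : 5 * n ∈ geoSet (Agraph n) := by
    refine ⟨Kpar (5 * n) (tpar (5 * n)), Kpar_isRealization _ _ (tpar_injective _), id, ?_, ?_⟩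
    · intro u v h
      exact (SimpleGraph.top_adj _ _).2 h.ne
    · intro e f hc
      show Kcross _ _ (Sym2.map id e) (Sym2.map id f)
      rw [Sym2.map_id, id_eq, id_eq]
      exact across_kcross hc
  have hlb : ∀ N ∈ geoSet (Agraph n), 5 * n ≤ N := by
    rintro N ⟨K, hK, f, hf⟩
    have := Fintype.card_le_of_injective f (hom_injective n N K hK f hf)
    simpa using this
  exact le_antisymm (Nat.sInf_le hmem) (le_csInf ⟨5 * n, hmem⟩ hlb)

/-- the coloring function on indices -/
def col (n q : ℕ) : ℕ :=
  if q < 3 * n then (if q % 3 = 1 then 4 * (q / 3) + 3 else 4 * (q / 3))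
  else 4 * ((q - 3 * n) / 2) + 1 + (q - 3 * n) % 2

lemma col_lt {n q : ℕ} (hq : q < 5 * n) : col n q < 4 * n := by
  unfold col; split_ifs <;> omega

@[simp] lemma col_va {n : ℕ} (k : Fin n) : col n (va n k).val = 4 * k.val := by
  have := k.isLt; rw [show (va n k).val = 3 * k.val from rfl, col]; split_ifs <;> omega

@[simp] lemma col_vV {n : ℕ} (k : Fin n) : col n (vV n k).val = 4 * k.val + 3 := by
  have := k.isLt; rw [show (vV n k).val = 3 * k.val + 1 from rfl, col]; split_ifs <;> omega

@[simp] lemma col_vc {n : ℕ} (k : Fin n) : col n (vc n k).val = 4 * k.val := by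
  have := k.isLt; rw [show (vc n k).val = 3 * k.val + 2 from rfl, col]; split_ifs <;> omega

@[simp] lemma col_vb {n : ℕ} (k : Fin n) : col n (vb n k).val = 4 * k.val + 1 := by
  have := k.isLt; rw [show (vb n k).val = 3 * n + 2 * k.val from rfl, col]; split_ifs <;> omega

@[simp] lemma col_vu {n : ℕ} (k : Fin n) : col n (vu n k).val = 4 * k.val + 2 := by
  have := k.isLt; rw [show (vu n k).val = 3 * n + 2 * k.val + 1 from rfl, col]; split_ifs <;> omega

lemma bun_col {n : ℕ} {k : Fin n} {a b : Fin (5 * n)} (h : bun n k s(a, b)) :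
    4 * k.val ≤ col n a.val ∧ col n a.val < 4 * k.val + 4 ∧
    4 * k.val ≤ col n b.val ∧ col n b.val < 4 * k.val + 4 ∧
    col n a.val ≠ col n b.val := by
  rcases h with h | h | h
  · rw [E1, Sym2.eq_iff] at h
    rcases h with ⟨rfl, rfl⟩ | ⟨rfl, rfl⟩ <;> simp <;> omega
  · rw [E2, Sym2.eq_iff] at h
    rcases h with ⟨rfl, rfl⟩ | ⟨rfl, rfl⟩ <;> simp <;> omega
  · rw [Eg, Sym2.eq_iff] at h
    rcases h with ⟨rfl, rfl⟩ | ⟨rfl, rfl⟩ <;> simp <;> omega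

lemma mem_pseudoSet (n : ℕ) : 4 * n ∈ pseudoSet (Agraph n) := by
  refine ⟨fun q => ⟨col n q.val, col_lt q.isLt⟩, ?_, ?_⟩
  · rintro u v ⟨hne, h | h⟩ <;> obtain ⟨k, hcase⟩ := h <;>
      rcases hcase with ⟨rfl, rfl⟩ | ⟨rfl, rfl⟩ | ⟨rfl, rfl⟩ | ⟨rfl, rfl⟩ | ⟨rfl, rfl⟩ <;>
      · simp only [ne_eq, Fin.mk.injEq, col_va, col_vV, col_vc, col_vb, col_vu]
        omega
  · rintro a b x y (⟨k, l, hkl, he, hf⟩ | ⟨k, h⟩)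
    · have hkl' : (k : ℕ) ≠ (l : ℕ) := fun hh => hkl (Fin.ext hh)
      obtain ⟨ha1, ha2, hb1, hb2, hab⟩ := bun_col he
      obtain ⟨hx1, hx2, hy1, hy2, hxy⟩ := bun_col hf
      refine ⟨?_, ?_, ?_, ?_, ?_, ?_⟩ <;> simp only [ne_eq, Fin.mk.injEq] <;> omega
    · rcases h with ⟨he, hf⟩ | ⟨he, hf⟩ | ⟨he, hf⟩ | ⟨he, hf⟩ <;>
        [(rw [E1, Sym2.eq_iff] at he; rw [Eg, Sym2.eq_iff] at hf);
         (rw [Eg, Sym2.eq_iff] at he; rw [E1, Sym2.eq_iff] at hf);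
         (rw [Ecu, Sym2.eq_iff] at he; rw [Ebv, Sym2.eq_iff] at hf);
         (rw [Ebv, Sym2.eq_iff] at he; rw [Ecu, Sym2.eq_iff] at hf)] <;>
      rcases he with ⟨rfl, rfl⟩ | ⟨rfl, rfl⟩ <;> rcases hf with ⟨rfl, rfl⟩ | ⟨rfl, rfl⟩ <;>
      · refine ⟨?_, ?_, ?_, ?_, ?_, ?_⟩ <;>
          simp only [ne_eq, Fin.mk.injEq, col_va, col_vV, col_vc, col_vb, col_vu] <;> omega

/-- the 4n distinguished vertices: roles a, b, u, v of each gadget -/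
def wv (n : ℕ) (j : Fin (4 * n)) : Fin (5 * n) :=
  ⟨if j.val % 4 = 0 then 3 * (j.val / 4)
   else if j.val % 4 = 1 then 3 * n + 2 * (j.val / 4)
   else if j.val % 4 = 2 then 3 * n + 2 * (j.val / 4) + 1
   else 3 * (j.val / 4) + 1, by have := j.isLt; split_ifs <;> omega⟩

lemma wv_cases (n : ℕ) (j : Fin (4 * n)) : ∃ k : Fin n,
    (j.val = 4 * k.val ∧ wv n j = va n k) ∨ (j.val = 4 * k.val + 1 ∧ wv n j = vb n k) ∨
    (j.val = 4 * k.val + 2 ∧ wv n j = vu n k) ∨ (j.val = 4 * k.val + 3 ∧ wv n j = vV n k) := by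
  have hj := j.isLt
  have h4 : j.val % 4 < 4 := Nat.mod_lt _ (by omega)
  have hdm := Nat.div_add_mod j.val 4
  refine ⟨⟨j.val / 4, by omega⟩, ?_⟩
  simp only [wv, va, vb, vu, vV, Fin.ext_iff]
  split_ifs <;> omega

lemma pseudo_lb (n N : ℕ) (h : N ∈ pseudoSet (Agraph n)) : 4 * n ≤ N := by
  obtain ⟨c, _, h2⟩ := h
  -- the intra-gadget crossing gives distinctness among a, b, u, v
  have hI : ∀ k : Fin n,
      c (va n k) ≠ c (vb n k) ∧ c (va n k) ≠ c (vu n k) ∧ c (va n k) ≠ c (vV n k) ∧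
      c (vb n k) ≠ c (vu n k) ∧ c (vb n k) ≠ c (vV n k) ∧ c (vu n k) ≠ c (vV n k) :=
    fun k => h2 (va n k) (vb n k) (vu n k) (vV n k) (Or.inr ⟨k, Or.inl ⟨rfl, rfl⟩⟩)
  -- the inter-gadget crossings
  have hE1E1 : ∀ k l : Fin n, k ≠ l → _ := fun k l hkl =>
    h2 (va n k) (vb n k) (va n l) (vb n l) (Or.inl ⟨k, l, hkl, Or.inl rfl, Or.inl rfl⟩)
  have hE1Eg : ∀ k l : Fin n, k ≠ l → _ := fun k l hkl =>
    h2 (va n k) (vb n k) (vu n l) (vV n l)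
      (Or.inl ⟨k, l, hkl, Or.inl rfl, Or.inr (Or.inr rfl)⟩)
  have hEgE1 : ∀ k l : Fin n, k ≠ l → _ := fun k l hkl =>
    h2 (vu n k) (vV n k) (va n l) (vb n l)
      (Or.inl ⟨k, l, hkl, Or.inr (Or.inr rfl), Or.inl rfl⟩)
  have hEgEg : ∀ k l : Fin n, k ≠ l → _ := fun k l hkl =>
    h2 (vu n k) (vV n k) (vu n l) (vV n l)
      (Or.inl ⟨k, l, hkl, Or.inr (Or.inr rfl), Or.inr (Or.inr rfl)⟩)
  have hinj : Function.Injective (fun j => c (wv n j)) := by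
    intro j j' heq
    simp only at heq
    obtain ⟨k, hk⟩ := wv_cases n j
    obtain ⟨l, hl⟩ := wv_cases n j'
    by_cases hkl : k = l
    · subst hkl
      rcases hk with ⟨hv, hw⟩ | ⟨hv, hw⟩ | ⟨hv, hw⟩ | ⟨hv, hw⟩ <;>
        rcases hl with ⟨hv', hw'⟩ | ⟨hv', hw'⟩ | ⟨hv', hw'⟩ | ⟨hv', hw'⟩ <;>
        rw [hw, hw'] at heq <;>
        first
          | (exact Fin.ext (by omega))
          | (exact absurd heq (hI k).1)
          | (exact absurd heq (hI k).2.1)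
          | (exact absurd heq (hI k).2.2.1)
          | (exact absurd heq (hI k).2.2.2.1)
          | (exact absurd heq (hI k).2.2.2.2.1)
          | (exact absurd heq (hI k).2.2.2.2.2)
          | (exact absurd heq.symm (hI k).1)
          | (exact absurd heq.symm (hI k).2.1)
          | (exact absurd heq.symm (hI k).2.2.1)
          | (exact absurd heq.symm (hI k).2.2.2.1)
          | (exact absurd heq.symm (hI k).2.2.2.2.1)
          | (exact absurd heq.symm (hI k).2.2.2.2.2)
    · exfalso
      rcases hk with ⟨hv, hw⟩ | ⟨hv, hw⟩ | ⟨hv, hw⟩ | ⟨hv, hw⟩ <;>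
        rcases hl with ⟨hv', hw'⟩ | ⟨hv', hw'⟩ | ⟨hv', hw'⟩ | ⟨hv', hw'⟩ <;>
        rw [hw, hw'] at heq <;>
        first
          | (exact absurd heq (hE1E1 k l hkl).2.1)
          | (exact absurd heq (hE1E1 k l hkl).2.2.1)
          | (exact absurd heq (hE1E1 k l hkl).2.2.2.1)
          | (exact absurd heq (hE1E1 k l hkl).2.2.2.2.1)
          | (exact absurd heq (hE1Eg k l hkl).2.1)
          | (exact absurd heq (hE1Eg k l hkl).2.2.1)
          | (exact absurd heq (hE1Eg k l hkl).2.2.2.1)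
          | (exact absurd heq (hE1Eg k l hkl).2.2.2.2.1)
          | (exact absurd heq (hEgE1 k l hkl).2.1)
          | (exact absurd heq (hEgE1 k l hkl).2.2.1)
          | (exact absurd heq (hEgE1 k l hkl).2.2.2.1)
          | (exact absurd heq (hEgE1 k l hkl).2.2.2.2.1)
          | (exact absurd heq (hEgEg k l hkl).2.1)
          | (exact absurd heq (hEgEg k l hkl).2.2.1)
          | (exact absurd heq (hEgEg k l hkl).2.2.2.1)
          | (exact absurd heq (hEgEg k l hkl).2.2.2.2.1)
  have := Fintype.card_le_of_injective _ hinj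
  simpa using this

lemma pseudoChrom_eq (n : ℕ) : pseudoChrom (Agraph n) = 4 * n :=
  le_antisymm (Nat.sInf_le (mem_pseudoSet n))
    (le_csInf ⟨4 * n, mem_pseudoSet n⟩ (fun N hN => pseudo_lb n N hN))

/-- For every positive integer `n` there is a geometric graph `G` with
`X(G) - X'(G) = n`. -/
theorem exists_geoChrom_sub_pseudoChrom_eq (n : ℕ) (hn : 1 ≤ n) :
    ∃ (m : ℕ) (A : GeomGraph (Fin m)), geoChrom A = pseudoChrom A + n := by
  exact ⟨5 * n, Agraph n, by rw [geoChrom_eq, pseudoChrom_eq]; omega⟩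
end
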